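/- arXiv:math/0307041 — 6 statements merged into one kernel-verified Lean document; each statement's English description precedes it below -/
import Mathlib

section
/- With the topology O of the previous construction, the canonical n-linear map τ : E₁ × ⋯ × E_n → (T, O) is continuous. -/
set_option maxHeartbeats 2000000


open scoped TensorProduct Pointwise
open Filter

/-- Basic neighbourhoods of the tensor product topology. -/
def piSumBoxes {n : ℕ} {E : Fin n → Type*} [∀ i, AddCommGroup (E i)]
    [∀ i, Module ℝ (E i)] (U : ℕ → ∀ i, Set (E i)) : Set (⨂[ℝ] i, E i) :=
  ⋃ k : ℕ, ∑ ℓ ∈ Finset.range k,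
    ((fun x : ∀ i, E i => ⨂ₜ[ℝ] i, x i) '' Set.pi Set.univ (U ℓ))

/-- Auxiliary: a sum indexed by a finite set, each term lying in one of the sets
`S (g s)` with `g` injective into `range k` and each `S ℓ` containing `0`,
lies in the pointwise sum of the sets `S ℓ`, `ℓ < k`. -/
theorem sum_mem_rangeSum {M α : Type*} [AddCommMonoid M] [DecidableEq α]
    (A : Finset α) (g : α → ℕ) (hg : Set.InjOn g A) (k : ℕ)
    (hgk : ∀ s ∈ A, g s < k) (S : ℕ → Set M) (hS0 : ∀ ℓ, (0 : M) ∈ S ℓ)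
    (x : α → M) (hx : ∀ s ∈ A, x s ∈ S (g s)) :
    ∑ s ∈ A, x s ∈ ∑ ℓ ∈ Finset.range k, S ℓ := by
  classical
  have h1 : ∑ s ∈ A, x s
      = ∑ ℓ ∈ Finset.range k, ∑ s ∈ A.filter (fun s => g s = ℓ), x s :=
    (Finset.sum_fiberwise_of_maps_to (fun s hs => Finset.mem_range.2 (hgk s hs)) x).symm
  rw [h1]
  refine Set.finset_sum_mem_finset_sum _ _ _ fun ℓ _ => ?_
  by_cases hex : ∃ s₀ ∈ A, g s₀ = ℓ
  · obtain ⟨s₀, hs₀A, hs₀⟩ := hex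
    have hfil : A.filter (fun s => g s = ℓ) = {s₀} := by
      ext s
      simp only [Finset.mem_filter, Finset.mem_singleton]
      constructor
      · rintro ⟨hsA, hsℓ⟩
        exact hg hsA hs₀A (by rw [hsℓ, hs₀])
      · rintro rfl; exact ⟨hs₀A, hs₀⟩
    rw [hfil, Finset.sum_singleton, ← hs₀]
    exact hx s₀ hs₀A
  · have hfil : A.filter (fun s => g s = ℓ) = ∅ := by
      ext s
      simp only [Finset.mem_filter, Finset.notMem_empty, iff_false, not_and]
      intro hsA hsℓ
      exact hex ⟨s, hsA, hsℓ⟩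
    rw [hfil, Finset.sum_empty]
    exact hS0 ℓ

/-- With the topology O of the construction (a vector topology whose 0-neighbourhood
basis consists of the sets piSumBoxes U), the canonical n-linear map
τ : E₁ × ⋯ × E_n → (T, O) is continuous. -/
theorem stmt_8 {n : ℕ} {E : Fin n → Type*} [∀ i, AddCommGroup (E i)]
    [∀ i, Module ℝ (E i)] [∀ i, TopologicalSpace (E i)]
    [∀ i, IsTopologicalAddGroup (E i)] [∀ i, ContinuousSMul ℝ (E i)]
    (O : TopologicalSpace (⨂[ℝ] i, E i))
    (hO₁ : @IsTopologicalAddGroup _ O _) (hO₂ : @ContinuousSMul ℝ _ _ _ O)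
    (hO₃ : (@nhds _ O 0).HasBasis
      (fun U : ℕ → ∀ i, Set (E i) =>
        ∀ k i, U k i ∈ nhds (0 : E i) ∧ Balanced ℝ (U k i))
      piSumBoxes) :
    @Continuous (∀ i, E i) _ _ O (fun x => ⨂ₜ[ℝ] i, x i) := by
  letI := O
  haveI := hO₁
  haveI := hO₂
  classical
  rcases Nat.eq_zero_or_pos n with hn | hn
  · subst hn
    have : (fun x : ∀ i, E i => ⨂ₜ[ℝ] i, x i)
        = fun _ => ⨂ₜ[ℝ] i, (fun i : Fin 0 => (0 : E i)) i := by
      funext x; congr 1; exact Subsingleton.elim _ _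
    rw [this]
    exact continuous_const
  haveI : Nonempty (Fin n) := ⟨⟨0, hn⟩⟩
  set τ : MultilinearMap ℝ E (⨂[ℝ] i, E i) := PiTensorProduct.tprod ℝ with hτ
  rw [continuous_iff_continuousAt]
  intro a
  rw [ContinuousAt, show (fun x : ∀ i, E i => ⨂ₜ[ℝ] i, x i) = fun x => τ x from rfl,
    ← tendsto_sub_nhds_zero_iff, hO₃.tendsto_right_iff]
  intro U hU
  set k := Fintype.card (Finset (Fin n)) with hk
  set d : Finset (Fin n) ≃ Fin k := Fintype.equivFin _ with hd
  -- choose scalars absorbing the point a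
  have habs : ∀ (s : Finset (Fin n)) (i : Fin n),
      ∃ t : ℝ, 0 < t ∧ t • a i ∈ U (d s) i := by
    intro s i
    obtain ⟨hmem, hbal⟩ := hU (d s) i
    have habs' : Absorbent ℝ (U (d s) i) := absorbent_nhds_zero hmem
    have hev : ∀ᶠ c : ℝ in nhdsWithin 0 {0}ᶜ, c • a i ∈ U (d s) i :=
      habs'.eventually_nhdsNE_zero (a i)
    obtain ⟨c, hcU, hc0⟩ := (hev.and self_mem_nhdsWithin).exists
    have hc0' : c ≠ 0 := hc0
    refine ⟨|c|, abs_pos.2 hc0', ?_⟩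
    have : |c| • a i = (|c| * c⁻¹) • (c • a i) := by
      rw [smul_smul, mul_assoc, inv_mul_cancel₀ hc0', mul_one]
    rw [this]
    refine hbal.smul_mem ?_ hcU
    rw [Real.norm_eq_abs, abs_mul, abs_inv, abs_abs, mul_inv_cancel₀ (abs_ne_zero.2 hc0')]
  choose t ht0 htU using habs
  set P : Finset (Fin n) → ℝ := fun s => ∏ i ∈ s, t s i with hP
  have hPpos : ∀ s, 0 < P s := fun s => Finset.prod_pos fun i _ => ht0 s i
  set ε : Finset (Fin n) → ℝ := fun s => min 1 (P s) with hε
  have hεpos : ∀ s, 0 < ε s := fun s => lt_min one_pos (hPpos s)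
  have hεle1 : ∀ s, ε s ≤ 1 := fun s => min_le_left _ _
  have hεleP : ∀ s, ε s ≤ P s := fun s => min_le_right _ _
  -- the neighbourhood of 0 in each factor
  set V : ∀ i, Set (E i) := fun i =>
    ⋂ s : Finset (Fin n), if i ∈ s then Set.univ else ε s • U (d s) i with hV
  have hVmem : ∀ i, V i ∈ nhds (0 : E i) := by
    intro i
    refine Filter.iInter_mem.2 fun s => ?_
    by_cases h : i ∈ s
    · simp [h]
    · simp only [h, if_false]
      exact (set_smul_mem_nhds_zero_iff (hεpos s).ne').2 (hU (d s) i).1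
  have hkey : ∀ᶠ x in nhds a, ∀ i, x i - a i ∈ V i := by
    rw [eventually_all]
    intro i
    have htend : Filter.Tendsto (fun x : ∀ i, E i => x i - a i) (nhds a)
        (nhds (a i - a i)) := ((continuous_apply i).tendsto a).sub tendsto_const_nhds
    rw [sub_self] at htend
    exact htend (hVmem i)
  filter_upwards [hkey] with x hx
  set h : ∀ i, E i := fun i => x i - a i with hh
  have hx' : x = a + h := by funext i; simp [hh]
  have expand : τ x - τ a
      = ∑ s ∈ (Finset.univ : Finset (Finset (Fin n))).erase Finset.univ,
          τ (s.piecewise a h) := by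
    rw [hx', MultilinearMap.map_add_univ,
      ← Finset.sum_erase_add _ _ (Finset.mem_univ (Finset.univ : Finset (Fin n))),
      Finset.piecewise_univ, add_sub_cancel_right]
  -- per-term membership
  have hterm : ∀ s ∈ (Finset.univ : Finset (Finset (Fin n))).erase Finset.univ,
      τ (s.piecewise a h)
        ∈ (fun y : ∀ i, E i => ⨂ₜ[ℝ] i, y i) '' Set.pi Set.univ (U (d s)) := by
    intro s hs
    have hsne : s ≠ Finset.univ := Finset.ne_of_mem_erase hs
    obtain ⟨j, hj⟩ : ∃ j, j ∉ s := by
      by_contra hcon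
      push_neg at hcon
      exact hsne (Finset.eq_univ_iff_forall.2 hcon)
    set w : ∀ i, E i := fun i => if i ∈ s then t s i • a i else (ε s)⁻¹ • h i with hw
    have hwU : ∀ i, w i ∈ U (d s) i := by
      intro i
      by_cases hi : i ∈ s
      · simpa [hw, hi] using htU s i
      · have hhi : h i ∈ ε s • U (d s) i := by
          have := Set.mem_iInter.1 (hx i) s
          simpa [hi] using this
        simpa [hw, hi] using
          (Set.mem_smul_set_iff_inv_smul_mem₀ (hεpos s).ne' _ _).1 hhi
    have hcard1 : 1 ≤ sᶜ.card :=
      Finset.card_pos.2 ⟨j, Finset.mem_compl.2 hj⟩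
    set γ : ℝ := (P s)⁻¹ * ε s ^ sᶜ.card with hγ
    have hγpos : 0 < γ := mul_pos (inv_pos.2 (hPpos s)) (pow_pos (hεpos s) _)
    have hγ1 : γ ≤ 1 := by
      rw [hγ, inv_mul_le_iff₀ (hPpos s), mul_one]
      calc ε s ^ sᶜ.card ≤ ε s ^ 1 :=
            pow_le_pow_of_le_one (hεpos s).le (hεle1 s) hcard1
        _ = ε s := pow_one _
        _ ≤ P s := hεleP s
    have hpiece : s.piecewise a h
        = fun i => (if i ∈ s then (t s i)⁻¹ else ε s) • w i := by
      funext i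
      by_cases hi : i ∈ s
      · simp [Finset.piecewise, hi, hw, smul_smul,
          inv_mul_cancel₀ (ht0 s i).ne']
      · simp [Finset.piecewise, hi, hw, smul_smul,
          mul_inv_cancel₀ (hεpos s).ne']
    have hfilnot : (Finset.univ.filter (fun i => ¬ i ∈ s)) = sᶜ := by
      ext i; simp [Finset.mem_compl]
    have hprod : (∏ i, if i ∈ s then (t s i)⁻¹ else ε s) = γ := by
      rw [Finset.prod_ite, Finset.filter_univ_mem, hfilnot, Finset.prod_const,
        Finset.prod_inv_distrib]
    have hτeq : τ (s.piecewise a h) = γ • τ w := by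
      rw [hpiece, τ.map_smul_univ, hprod]
    refine ⟨Function.update w j (γ • w j), fun i _ => ?_, ?_⟩
    · by_cases hij : i = j
      · subst hij
        rw [Function.update_self]
        exact (hU (d s) i).2.smul_mem
          (by rw [Real.norm_eq_abs, abs_of_pos hγpos]; exact hγ1) (hwU i)
      · rw [Function.update_of_ne hij]
        exact hwU i
    · show τ (Function.update w j (γ • w j)) = τ (s.piecewise a h)
      rw [hτeq, MultilinearMap.map_update_smul, Function.update_eq_self]
  rw [expand]
  unfold piSumBoxes
  refine Set.mem_iUnion.2 ⟨k, ?_⟩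
  refine sum_mem_rangeSum _ (fun s => ((d s : Fin k) : ℕ)) ?_ k ?_ _ ?_ _ hterm
  · intro s₁ _ s₂ _ h12
    exact d.injective (Fin.ext h12)
  · intro s _
    exact (d s).isLt
  · intro ℓ
    exact ⟨0, fun i _ => mem_of_mem_nhds (hU ℓ i).1,
      (PiTensorProduct.tprod ℝ).map_zero⟩
end

section
/- Let E₁, ..., E_n be real topological vector spaces and T = E₁ ⊗ ⋯ ⊗ E_n with the topology O from the construction. For every continuous n-linear map f : E₁ × ⋯ × E_n → E into a real topological vector space E, the unique linear map f̃ : T → E with f̃ ∘ τ = f is continuous. -/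
open scoped TensorProduct Pointwise
open Filter Topology

/-- With the topology O of the construction on T = E₁ ⊗ ⋯ ⊗ E_n, for every continuous
n-linear map f : E₁ × ⋯ × E_n → F into a real topological vector space F, the unique
linear map f̃ : T → F with f̃ ∘ τ = f is continuous. -/
theorem stmt_9 {n : ℕ} {E : Fin n → Type*} [∀ i, AddCommGroup (E i)]
    [∀ i, Module ℝ (E i)] [∀ i, TopologicalSpace (E i)]
    [∀ i, IsTopologicalAddGroup (E i)] [∀ i, ContinuousSMul ℝ (E i)]
    {F : Type*} [AddCommGroup F] [Module ℝ F] [TopologicalSpace F]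
    [IsTopologicalAddGroup F] [ContinuousSMul ℝ F]
    (O : TopologicalSpace (⨂[ℝ] i, E i))
    (hO₁ : @IsTopologicalAddGroup _ O _) (hO₂ : @ContinuousSMul ℝ _ _ _ O)
    (hO₃ : (@nhds _ O 0).HasBasis
      (fun U : ℕ → ∀ i, Set (E i) =>
        ∀ k i, U k i ∈ nhds (0 : E i) ∧ Balanced ℝ (U k i))
      piSumBoxes)
    (f : MultilinearMap ℝ E F) (hf : Continuous f) :
    @Continuous _ F O _ (PiTensorProduct.lift f) := by
  letI := O
  haveI := hO₁
  rcases Nat.eq_zero_or_pos n with h0 | hpos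
  · -- degenerate case n = 0 : the hypotheses are contradictory
    subst h0
    exfalso
    set t : ⨂[ℝ] i : Fin 0, E i := ⨂ₜ[ℝ] i, (0 : E i) with ht
    -- every basic set equals the set of natural multiples of t
    have hbox : ∀ U : ℕ → ∀ i : Fin 0, Set (E i),
        piSumBoxes U = Set.range (fun k : ℕ => k • t) := by
      intro U
      have h1 : ∀ ℓ, ((fun x : ∀ i : Fin 0, E i => ⨂ₜ[ℝ] i, x i) ''
          Set.pi Set.univ (U ℓ)) = {t} := by
        intro ℓ
        ext y
        simp only [Set.mem_image, Set.mem_singleton_iff]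
        constructor
        · rintro ⟨x, -, rfl⟩
          rw [ht, Subsingleton.elim x (fun i => (0 : E i))]
        · rintro rfl
          exact ⟨fun i => 0, by simp [Set.mem_pi], rfl⟩
      have h2 : ∀ k, (∑ ℓ ∈ Finset.range k,
          ((fun x : ∀ i : Fin 0, E i => ⨂ₜ[ℝ] i, x i) '' Set.pi Set.univ (U ℓ)))
          = {k • t} := by
        intro k
        induction k with
        | zero => simp [Set.singleton_zero]
        | succ k ih =>
            rw [Finset.sum_range_succ, ih, h1, Set.singleton_add_singleton,
              succ_nsmul]
      unfold piSumBoxes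
      simp_rw [h2]
      exact Set.iUnion_singleton_eq_range _
    have hS : piSumBoxes (fun _ i => (Set.univ : Set (E i))) ∈ @nhds _ O 0 :=
      hO₃.mem_of_mem (fun k i => ⟨Filter.univ_mem, balanced_univ⟩)
    have hneg : (fun x : ⨂[ℝ] i : Fin 0, E i => -x) ⁻¹'
        (piSumBoxes (fun _ i => (Set.univ : Set (E i)))) ∈ @nhds _ O 0 := by
      refine ContinuousAt.preimage_mem_nhds continuous_neg.continuousAt ?_
      rwa [neg_zero]
    obtain ⟨U', -, hU'⟩ := (hO₃.mem_iff).mp hneg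
    have h1 : t ∈ piSumBoxes U' := by
      rw [hbox]; exact ⟨1, one_nsmul t⟩
    have h2 := hU' h1
    rw [Set.mem_preimage, hbox] at h2
    obtain ⟨m, hm⟩ := h2
    have he := congrArg (PiTensorProduct.isEmptyEquiv (Fin 0)) hm
    rw [map_nsmul, map_neg, ht, PiTensorProduct.isEmptyEquiv_apply_tprod] at he
    have : (m : ℝ) = -1 := by simpa using he
    have := Nat.cast_nonneg (α := ℝ) m
    linarith
  · -- main case n ≥ 1
    haveI : Nonempty (Fin n) := ⟨⟨0, hpos⟩⟩
    refine continuous_of_continuousAt_zero (PiTensorProduct.lift f) ?_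
    rw [ContinuousAt, map_zero, Filter.tendsto_def]
    intro V hV
    rw [hO₃.mem_iff]
    -- a sequence of "halving" neighbourhoods
    have key : ∀ S : Set F, ∃ T' : Set F, T' ∈ nhds (0 : F) ∧
        (S ∈ nhds (0 : F) → T' + T' ⊆ S) := by
      intro S
      by_cases h : S ∈ nhds (0 : F)
      · obtain ⟨T', hT', h2⟩ := exists_nhds_zero_half h
        refine ⟨T', hT', fun _ => ?_⟩
        rintro x ⟨a, ha, b, hb, rfl⟩
        exact h2 a ha b hb
      · exact ⟨Set.univ, Filter.univ_mem, fun h' => absurd h' h⟩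
    choose half hhalf1 hhalf2 using key
    set W : ℕ → Set F := fun k => half^[k + 1] V with hWdef
    have hWn : ∀ k, W k ∈ nhds (0 : F) := by
      intro k
      simp only [hWdef, Function.iterate_succ_apply']
      exact hhalf1 _
    have hWsucc : ∀ k, W (k + 1) = half (W k) := by
      intro k
      simp only [hWdef, Function.iterate_succ_apply']
    have hWstep : ∀ k, W (k + 1) + W (k + 1) ⊆ W k := by
      intro k
      rw [hWsucc]
      exact hhalf2 (W k) (hWn k)
    have hW0 : W 0 + W 0 ⊆ V := by
      have : W 0 = half V := by simp [hWdef]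
      rw [this]
      exact hhalf2 V hV
    have hWsum : ∀ k j, (∑ ℓ ∈ Finset.range k, W (j + ℓ)) ⊆ W j + W j := by
      intro k
      induction k with
      | zero =>
          intro j x hx
          simp only [Finset.range_zero, Finset.sum_empty, Set.mem_zero] at hx
          subst hx
          simpa using Set.add_mem_add (mem_of_mem_nhds (hWn j)) (mem_of_mem_nhds (hWn j))
      | succ k ih =>
          intro j
          rw [Finset.sum_range_succ']
          have hre : (∑ ℓ ∈ Finset.range k, W (j + (ℓ + 1)))
              = ∑ ℓ ∈ Finset.range k, W ((j + 1) + ℓ) :=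
            Finset.sum_congr rfl (fun ℓ _ => by rw [show j + (ℓ + 1) = (j + 1) + ℓ by omega])
          rw [hre]
          calc (∑ ℓ ∈ Finset.range k, W ((j + 1) + ℓ)) + W (j + 0)
              ⊆ (W (j + 1) + W (j + 1)) + W j :=
                Set.add_subset_add (ih (j + 1)) (by rw [Nat.add_zero])
            _ ⊆ W j + W j := Set.add_subset_add (hWstep j) le_rfl
    have hWsumV : ∀ k, (∑ ℓ ∈ Finset.range k, W ℓ) ⊆ V := by
      intro k
      refine Set.Subset.trans ?_ ((hWsum k 0).trans hW0)
      exact le_of_eq (Finset.sum_congr rfl (fun ℓ _ => by rw [Nat.zero_add]))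
    -- choose boxes mapped by f into the W's
    have hbox : ∀ S : Set F, S ∈ nhds (0 : F) → ∃ U : ∀ i, Set (E i),
        (∀ i, U i ∈ nhds (0 : E i) ∧ Balanced ℝ (U i)) ∧
        ∀ x : ∀ i, E i, (∀ i, x i ∈ U i) → f x ∈ S := by
      intro S hS
      have h0 : f (0 : ∀ i, E i) = 0 := f.map_zero
      have h1 : f ⁻¹' S ∈ nhds (0 : ∀ i, E i) :=
        hf.continuousAt.preimage_mem_nhds (by rwa [h0])
      rw [nhds_pi, Filter.mem_pi] at h1
      obtain ⟨I, -, ts, hts, htsub⟩ := h1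
      have hbal : ∀ i, ∃ B : Set (E i), (B ∈ nhds (0 : E i) ∧ Balanced ℝ B) ∧ B ⊆ ts i := by
        intro i
        exact (nhds_basis_balanced ℝ (E i)).mem_iff.mp (hts i)
      choose B hB1 hB2 using hbal
      refine ⟨B, hB1, fun x hx => ?_⟩
      refine htsub (fun i _ => hB2 i (hx i))
    choose U hU1 hU2 using fun ℓ => hbox (W ℓ) (hWn ℓ)
    refine ⟨U, fun k i => hU1 k i, ?_⟩
    have himg : ∀ (s : Finset ℕ) (x : ⨂[ℝ] i, E i),
        x ∈ ∑ ℓ ∈ s, ((fun x : ∀ i, E i => ⨂ₜ[ℝ] i, x i) '' Set.pi Set.univ (U ℓ)) →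
        PiTensorProduct.lift f x ∈ ∑ ℓ ∈ s, W ℓ := by
      intro s
      induction s using Finset.cons_induction with
      | empty =>
          intro x hx
          simp only [Finset.sum_empty, Set.mem_zero] at hx ⊢
          subst hx
          simp
      | cons a s ha ih =>
          intro x hx
          rw [Finset.sum_cons] at hx ⊢
          obtain ⟨y, hy, z, hz, rfl⟩ := hx
          rw [map_add]
          refine Set.add_mem_add ?_ (ih z hz)
          obtain ⟨v, hv, rfl⟩ := hy
          rw [PiTensorProduct.lift.tprod]
          exact hU2 a v (fun i => hv i (Set.mem_univ i))
    intro x hx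
    obtain ⟨k, hk⟩ := Set.mem_iUnion.mp hx
    rw [Set.mem_preimage]
    exact hWsumV k (himg (Finset.range k) x hk)
end

section
/- Let E₁, E₂, E₃ be real topological vector spaces with E₃ locally bounded. Then the canonical linear bijection φ : E₁ ⊗ E₂ ⊗ E₃ → (E₁ ⊗ E₂) ⊗ E₃ determined by x ⊗ y ⊗ z ↦ (x ⊗ y) ⊗ z is a homeomorphism, where all tensor products carry the projective-type topology of the construction (0-neighbourhood basis of countable sums of tensor-box neighbourhoods). -/
open scoped TensorProduct Pointwise
open Filter

/-- The image {x ⊗ y : x ∈ U, y ∈ V} of a box under the canonical bilinear map. -/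
def tensorBox {E F : Type*} [AddCommGroup E] [Module ℝ E] [AddCommGroup F] [Module ℝ F]
    (U : Set E) (V : Set F) : Set (E ⊗[ℝ] F) :=
  Set.image2 (fun x y => x ⊗ₜ[ℝ] y) U V

/-- Basic 0-neighbourhoods of the (two-fold) tensor product topology. -/
def sumBoxes {E F : Type*} [AddCommGroup E] [Module ℝ E] [AddCommGroup F] [Module ℝ F]
    (U : ℕ → Set E) (V : ℕ → Set F) : Set (E ⊗[ℝ] F) :=
  ⋃ k : ℕ, ∑ ℓ ∈ Finset.range k, tensorBox (U ℓ) (V ℓ)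

/-- `O` is the (two-fold) tensor product topology on E ⊗ F: a vector topology admitting
the sets `sumBoxes U V` (over sequences of balanced 0-neighbourhoods) as a basis of
0-neighbourhoods. -/
def IsTensorTopology (E F : Type*) [AddCommGroup E] [Module ℝ E] [TopologicalSpace E]
    [AddCommGroup F] [Module ℝ F] [TopologicalSpace F]
    (O : TopologicalSpace (E ⊗[ℝ] F)) : Prop :=
  @IsTopologicalAddGroup _ O _ ∧ @ContinuousSMul ℝ _ _ _ O ∧
    (@nhds _ O 0).HasBasis
      (fun UV : (ℕ → Set E) × (ℕ → Set F) =>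
        (∀ k, UV.1 k ∈ nhds (0 : E) ∧ Balanced ℝ (UV.1 k)) ∧
        (∀ k, UV.2 k ∈ nhds (0 : F) ∧ Balanced ℝ (UV.2 k)))
      (fun UV => sumBoxes UV.1 UV.2)

/-- Basic 0-neighbourhoods of the three-fold tensor product topology, realized on the
vector space (E₁ ⊗ E₂) ⊗ E₃ via the trilinear map (x,y,z) ↦ (x ⊗ y) ⊗ z. -/
def sumBoxes3 {E₁ E₂ E₃ : Type*} [AddCommGroup E₁] [Module ℝ E₁]
    [AddCommGroup E₂] [Module ℝ E₂] [AddCommGroup E₃] [Module ℝ E₃]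
    (U : ℕ → Set E₁) (V : ℕ → Set E₂) (W : ℕ → Set E₃) :
    Set ((E₁ ⊗[ℝ] E₂) ⊗[ℝ] E₃) :=
  ⋃ k : ℕ, ∑ ℓ ∈ Finset.range k,
    {t : (E₁ ⊗[ℝ] E₂) ⊗[ℝ] E₃ |
      ∃ x ∈ U ℓ, ∃ y ∈ V ℓ, ∃ z ∈ W ℓ, t = (x ⊗ₜ[ℝ] y) ⊗ₜ[ℝ] z}

/-- `O` is the three-fold tensor product topology on E₁ ⊗ E₂ ⊗ E₃ (realized on the
vector space (E₁ ⊗ E₂) ⊗ E₃, which is canonically isomorphic to it via φ). -/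
def IsTensorTopology3 (E₁ E₂ E₃ : Type*) [AddCommGroup E₁] [Module ℝ E₁]
    [TopologicalSpace E₁] [AddCommGroup E₂] [Module ℝ E₂] [TopologicalSpace E₂]
    [AddCommGroup E₃] [Module ℝ E₃] [TopologicalSpace E₃]
    (O : TopologicalSpace ((E₁ ⊗[ℝ] E₂) ⊗[ℝ] E₃)) : Prop :=
  @IsTopologicalAddGroup _ O _ ∧ @ContinuousSMul ℝ _ _ _ O ∧
    (@nhds _ O 0).HasBasis
      (fun UVW : (ℕ → Set E₁) × (ℕ → Set E₂) × (ℕ → Set E₃) =>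
        (∀ k, UVW.1 k ∈ nhds (0 : E₁) ∧ Balanced ℝ (UVW.1 k)) ∧
        (∀ k, UVW.2.1 k ∈ nhds (0 : E₂) ∧ Balanced ℝ (UVW.2.1 k)) ∧
        (∀ k, UVW.2.2 k ∈ nhds (0 : E₃) ∧ Balanced ℝ (UVW.2.2 k)))
      (fun UVW => sumBoxes3 UVW.1 UVW.2.1 UVW.2.2)


section Aux

variable {X : Type*} [AddCommMonoid X]

/-- The union of the partial pointwise sums of a sequence of sets. -/
def uSum (S : ℕ → Set X) : Set X := ⋃ k : ℕ, ∑ ℓ ∈ Finset.range k, S ℓ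

lemma mem_uSum_iff {S : ℕ → Set X} {t : X} :
    t ∈ uSum S ↔ ∃ (k : ℕ) (c : ℕ → X),
      (∀ ℓ, ℓ < k → c ℓ ∈ S ℓ) ∧ ∑ ℓ ∈ Finset.range k, c ℓ = t := by
  constructor
  · rintro h
    obtain ⟨k, hk⟩ := Set.mem_iUnion.mp h
    obtain ⟨g, hg, hsum⟩ := (Set.mem_finset_sum _ _ _).mp hk
    exact ⟨k, g, fun ℓ hℓ => hg (Finset.mem_range.mpr hℓ), hsum⟩
  · rintro ⟨k, c, hc, rfl⟩
    exact Set.mem_iUnion.mpr ⟨k,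
      Set.finset_sum_mem_finset_sum _ _ _ fun ℓ hℓ => hc ℓ (Finset.mem_range.mp hℓ)⟩

lemma sum_mem_uSum {S : ℕ → Set X} (h0 : ∀ j, (0 : X) ∈ S j) (F : Finset ℕ) (c : ℕ → X)
    (hc : ∀ j ∈ F, c j ∈ S j) : (∑ j ∈ F, c j) ∈ uSum S := by
  classical
  set K := F.sup id + 1 with hK
  have hFK : F ⊆ Finset.range K := fun j hj =>
    Finset.mem_range.mpr (Nat.lt_succ_of_le (Finset.le_sup (f := id) hj))
  have hsum : (∑ j ∈ F, c j) = ∑ j ∈ Finset.range K, (if j ∈ F then c j else 0) := by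
    rw [Finset.sum_ite_mem, Finset.inter_eq_right.mpr hFK]
  rw [hsum]
  exact Set.mem_iUnion.mpr ⟨K, Set.finset_sum_mem_finset_sum _ _ _ fun j _ => by
    by_cases hj : j ∈ F
    · simpa [hj] using hc j hj
    · simpa [hj] using h0 j⟩

/-- Summing elements from disjoint `Nat.pair`-indexed blocks of a `uSum` lands in `uSum`. -/
lemma blocks_mem_uSum {S : ℕ → Set X} (h0 : ∀ j, (0 : X) ∈ S j) {k : ℕ} {t : ℕ → X}
    (ht : ∀ ℓ, ℓ < k → t ℓ ∈ uSum (fun m => S (Nat.pair ℓ m))) :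
    (∑ ℓ ∈ Finset.range k, t ℓ) ∈ uSum S := by
  classical
  have H : ∀ ℓ, ∃ (n : ℕ) (c : ℕ → X), ℓ < k →
      (∀ m, m < n → c m ∈ S (Nat.pair ℓ m)) ∧ ∑ m ∈ Finset.range n, c m = t ℓ := by
    intro ℓ
    by_cases hℓ : ℓ < k
    · obtain ⟨n, c, hc, hsum⟩ := mem_uSum_iff.mp (ht ℓ hℓ)
      exact ⟨n, c, fun _ => ⟨hc, hsum⟩⟩
    · exact ⟨0, fun _ => 0, fun h => absurd h hℓ⟩
  choose n c hc using H
  set F : Finset ℕ :=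
    (Finset.range k).biUnion (fun ℓ => (Finset.range (n ℓ)).image (Nat.pair ℓ)) with hF
  set d : ℕ → X := fun j => c (Nat.unpair j).1 (Nat.unpair j).2 with hd
  have hdisj : (↑(Finset.range k) : Set ℕ).PairwiseDisjoint
      (fun ℓ => (Finset.range (n ℓ)).image (Nat.pair ℓ)) := by
    intro a _ b _ hab
    rw [Function.onFun, Finset.disjoint_left]
    rintro j hj hj'
    obtain ⟨m, _, rfl⟩ := Finset.mem_image.mp hj
    obtain ⟨m', _, he⟩ := Finset.mem_image.mp hj'
    exact hab (Nat.pair_eq_pair.mp he).1.symm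
  have key : ∑ j ∈ F, d j = ∑ ℓ ∈ Finset.range k, t ℓ := by
    rw [hF, Finset.sum_biUnion hdisj]
    refine Finset.sum_congr rfl fun ℓ hℓ => ?_
    rw [Finset.sum_image (fun a _ b _ hab => (Nat.pair_eq_pair.mp hab).2)]
    rw [← (hc ℓ (Finset.mem_range.mp hℓ)).2]
    exact Finset.sum_congr rfl fun m _ => by simp [hd, Nat.unpair_pair]
  rw [← key]
  refine sum_mem_uSum h0 F d fun j hj => ?_
  obtain ⟨ℓ, hℓ, hj⟩ := Finset.mem_biUnion.mp hj
  obtain ⟨m, hm, rfl⟩ := Finset.mem_image.mp hj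
  simpa [hd, Nat.unpair_pair] using
    (hc ℓ (Finset.mem_range.mp hℓ)).1 m (Finset.mem_range.mp hm)

end Aux

section TensorAux

variable {E F : Type*} [AddCommGroup E] [Module ℝ E] [AddCommGroup F] [Module ℝ F]

lemma balanced_tensorBox {U : Set E} (hU : Balanced ℝ U) (V : Set F) :
    Balanced ℝ (tensorBox U V) := by
  intro a ha z hz
  obtain ⟨w, hw, rfl⟩ := hz
  obtain ⟨x, hx, y, hy, rfl⟩ := hw
  exact ⟨a • x, hU.smul_mem ha hx, y, hy, (TensorProduct.smul_tmul' a x y).symm⟩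

lemma balanced_finsetSum {ι : Type*} (s : Finset ι) (f : ι → Set E)
    (h : ∀ i ∈ s, Balanced ℝ (f i)) : Balanced ℝ (∑ i ∈ s, f i) := by
  classical
  induction s using Finset.induction_on with
  | empty => simpa using balanced_zero
  | @insert i s hi ih =>
    rw [Finset.sum_insert hi]
    exact (h i (Finset.mem_insert_self _ _)).add
      (ih fun j hj => h j (Finset.mem_insert_of_mem hj))

lemma balanced_iUnion' {ι : Type*} {f : ι → Set E} (h : ∀ i, Balanced ℝ (f i)) :
    Balanced ℝ (⋃ i, f i) := fun a ha =>
  (Set.smul_set_iUnion _ _).subset.trans (Set.iUnion_mono fun i => h i a ha)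

lemma balanced_sumBoxes {U : ℕ → Set E} {V : ℕ → Set F} (hU : ∀ k, Balanced ℝ (U k)) :
    Balanced ℝ (sumBoxes U V) :=
  balanced_iUnion' fun k => balanced_finsetSum _ _ fun ℓ _ => balanced_tensorBox (hU ℓ) _

lemma sumBoxes_eq_uSum (U : ℕ → Set E) (V : ℕ → Set F) :
    sumBoxes U V = uSum (fun ℓ => tensorBox (U ℓ) (V ℓ)) := rfl

/-- `0 ∈ U` scaled neighbourhood lemma: `c⁻¹ • U` is a 0-neighbourhood. -/
lemma inv_smul_mem_nhds_zero {G : Type*} [AddCommGroup G] [Module ℝ G] [TopologicalSpace G]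
    [ContinuousSMul ℝ G] {U : Set G} (hU : U ∈ nhds (0 : G)) {c : ℝ} (hc : c ≠ 0) :
    c⁻¹ • U ∈ nhds (0 : G) := by
  have h1 : (fun x : G => c • x) ⁻¹' U ∈ nhds (0 : G) :=
    ((continuous_const_smul c).continuousAt (x := (0 : G))).preimage_mem_nhds
      (by rwa [smul_zero])
  have h2 : c⁻¹ • U = (fun x : G => c • x) ⁻¹' U := by
    ext x
    constructor
    · rintro ⟨u, hu, rfl⟩
      simpa [smul_smul, mul_inv_cancel₀ hc] using hu
    · intro hx
      exact ⟨c • x, hx, by simp [smul_smul, inv_mul_cancel₀ hc]⟩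
  rwa [h2]

end TensorAux

section Tensor3Aux

variable {E₁ E₂ E₃ : Type*} [AddCommGroup E₁] [Module ℝ E₁]
  [AddCommGroup E₂] [Module ℝ E₂] [AddCommGroup E₃] [Module ℝ E₃]

/-- The three-fold tensor box. -/
def tbox3 (U : Set E₁) (V : Set E₂) (W : Set E₃) : Set ((E₁ ⊗[ℝ] E₂) ⊗[ℝ] E₃) :=
  {t | ∃ x ∈ U, ∃ y ∈ V, ∃ z ∈ W, t = (x ⊗ₜ[ℝ] y) ⊗ₜ[ℝ] z}

lemma sumBoxes3_eq_uSum (U : ℕ → Set E₁) (V : ℕ → Set E₂) (W : ℕ → Set E₃) :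
    sumBoxes3 U V W = uSum (fun ℓ => tbox3 (U ℓ) (V ℓ) (W ℓ)) := rfl

end Tensor3Aux

set_option maxHeartbeats 1000000 in
/-- Let E₁, E₂, E₃ be real topological vector spaces with E₃ locally bounded.  Then the
canonical linear bijection φ : E₁ ⊗ E₂ ⊗ E₃ → (E₁ ⊗ E₂) ⊗ E₃ (realized here as the
identity of (E₁ ⊗ E₂) ⊗ E₃, carrying the three-fold tensor topology O₃ on its source
and the iterated tensor topology O₁₂ on its target) is a homeomorphism. -/
theorem stmt_12 {E₁ E₂ E₃ : Type*} [AddCommGroup E₁] [Module ℝ E₁] [TopologicalSpace E₁]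
    [IsTopologicalAddGroup E₁] [ContinuousSMul ℝ E₁]
    [AddCommGroup E₂] [Module ℝ E₂] [TopologicalSpace E₂]
    [IsTopologicalAddGroup E₂] [ContinuousSMul ℝ E₂]
    [AddCommGroup E₃] [Module ℝ E₃] [TopologicalSpace E₃]
    [IsTopologicalAddGroup E₃] [ContinuousSMul ℝ E₃]
    (hE₃ : ∃ B ∈ nhds (0 : E₃), Bornology.IsVonNBounded ℝ B)
    (O₁₂' : TopologicalSpace (E₁ ⊗[ℝ] E₂))
    (hO₁₂' : IsTensorTopology E₁ E₂ O₁₂')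
    (O₃ : TopologicalSpace ((E₁ ⊗[ℝ] E₂) ⊗[ℝ] E₃))
    (hO₃ : IsTensorTopology3 E₁ E₂ E₃ O₃)
    (O₁₂ : TopologicalSpace ((E₁ ⊗[ℝ] E₂) ⊗[ℝ] E₃))
    (hO₁₂ : @IsTensorTopology (E₁ ⊗[ℝ] E₂) E₃ _ _ O₁₂' _ _ _ O₁₂) :
    @IsHomeomorph _ _ O₃ O₁₂ id := by
  classical
  obtain ⟨hO₃gp, hO₃sm, hO₃b⟩ := hO₃
  obtain ⟨hO₁₂gp, hO₁₂sm, hO₁₂b⟩ := hO₁₂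
  obtain ⟨hO₁₂'gp, hO₁₂'sm, hO₁₂'b⟩ := hO₁₂'
  have key : @nhds _ O₃ 0 = @nhds _ O₁₂ 0 := by
    refine hO₃b.ext hO₁₂b ?_ ?_
    · -- hard direction: each three-fold basic nbhd contains an iterated basic nbhd
      rintro ⟨U, V, W⟩ ⟨hU, hV, hW⟩
      -- a balanced bounded neighbourhood of 0 in E₃
      obtain ⟨B₀, hB₀n, hB₀b⟩ := hE₃
      obtain ⟨B, ⟨hBn, hBbal⟩, hBsub⟩ := (nhds_basis_balanced ℝ E₃).mem_iff.mp hB₀n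
      have hBbdd : Bornology.IsVonNBounded ℝ B := hB₀b.subset hBsub
      -- absorption constants
      have habs : ∀ j : ℕ, ∃ c : ℝ, c ≠ 0 ∧ B ⊆ c • W j := by
        intro j
        obtain ⟨r, hr⟩ := absorbs_iff_norm.mp (hBbdd (hW j).1)
        refine ⟨max r 1, by positivity, hr _ ?_⟩
        rw [Real.norm_eq_abs, abs_of_pos (by positivity)]
        exact le_max_left _ _
      choose cc hcc0 hccs using habs
      -- rescaled neighbourhoods in E₁
      have hU₂n : ∀ j, (cc j)⁻¹ • U j ∈ nhds (0 : E₁) ∧ Balanced ℝ ((cc j)⁻¹ • U j) :=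
        fun j => ⟨inv_smul_mem_nhds_zero (hU j).1 (hcc0 j), (hU j).2.smul _⟩
      -- the sequence of neighbourhoods in E₁ ⊗ E₂
      set P : ℕ → Set (E₁ ⊗[ℝ] E₂) := fun ℓ =>
        sumBoxes (fun m => (cc (Nat.pair ℓ m))⁻¹ • U (Nat.pair ℓ m))
          (fun m => V (Nat.pair ℓ m)) with hP
      have hPn : ∀ ℓ, P ℓ ∈ @nhds _ O₁₂' 0 ∧ Balanced ℝ (P ℓ) := fun ℓ =>
        ⟨hO₁₂'b.mem_of_mem
          (i := (fun m => (cc (Nat.pair ℓ m))⁻¹ • U (Nat.pair ℓ m), fun m => V (Nat.pair ℓ m)))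
          ⟨fun m => hU₂n _, fun m => hV _⟩,
          balanced_sumBoxes fun m => (hU₂n _).2⟩
      refine ⟨(P, fun _ => B), ⟨hPn, fun _ => ⟨hBn, hBbal⟩⟩, ?_⟩
      -- the inclusion sumBoxes P (const B) ⊆ sumBoxes3 U V W
      have h0T : ∀ j, (0 : (E₁ ⊗[ℝ] E₂) ⊗[ℝ] E₃) ∈ tbox3 (U j) (V j) (W j) := fun j =>
        ⟨0, mem_of_mem_nhds (hU j).1, 0, mem_of_mem_nhds (hV j).1, 0,
          mem_of_mem_nhds (hW j).1, by simp⟩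
      -- single box inclusion into a block
      have hbox : ∀ ℓ : ℕ, tensorBox (P ℓ) B ⊆
          uSum (fun m => tbox3 (U (Nat.pair ℓ m)) (V (Nat.pair ℓ m)) (W (Nat.pair ℓ m))) := by
        rintro ℓ t ⟨p, hp, w, hw, rfl⟩
        simp only [hP] at hp
        rw [sumBoxes_eq_uSum] at hp
        obtain ⟨nn, g, hg, rfl⟩ := mem_uSum_iff.mp hp
        beta_reduce
        rw [TensorProduct.sum_tmul]
        refine mem_uSum_iff.mpr ⟨nn, fun m => g m ⊗ₜ[ℝ] w, fun m hm => ?_, rfl⟩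
        obtain ⟨u, hu, v, hv, huv⟩ := hg m hm
        obtain ⟨u', hu', rfl⟩ := hu
        refine ⟨u', hu', v, hv, (cc (Nat.pair ℓ m))⁻¹ • w, ?_, ?_⟩
        · obtain ⟨w', hw', rfl⟩ := hccs (Nat.pair ℓ m) hw
          rwa [inv_smul_smul₀ (hcc0 _)]
        · beta_reduce
          rw [← huv]
          beta_reduce
          rw [← TensorProduct.smul_tmul', TensorProduct.smul_tmul]
      intro t ht
      rw [sumBoxes_eq_uSum] at ht
      obtain ⟨k, q, hq, rfl⟩ := mem_uSum_iff.mp ht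
      rw [sumBoxes3_eq_uSum]
      exact blocks_mem_uSum h0T fun ℓ hℓ => hbox ℓ (hq ℓ hℓ)
    · -- easy direction
      rintro ⟨P, W⟩ ⟨hP, hW⟩
      have hchoice : ∀ ℓ : ℕ, ∃ UV : (ℕ → Set E₁) × (ℕ → Set E₂),
          ((∀ k, UV.1 k ∈ nhds (0 : E₁) ∧ Balanced ℝ (UV.1 k)) ∧
            (∀ k, UV.2 k ∈ nhds (0 : E₂) ∧ Balanced ℝ (UV.2 k))) ∧
          sumBoxes UV.1 UV.2 ⊆ P ℓ := fun ℓ => hO₁₂'b.mem_iff.mp (hP ℓ).1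
      choose UV hUV hUVsub using hchoice
      refine ⟨(fun ℓ => (UV ℓ).1 0, fun ℓ => (UV ℓ).2 0, W),
        ⟨fun ℓ => (hUV ℓ).1 0, fun ℓ => (hUV ℓ).2 0, hW⟩, ?_⟩
      refine Set.iUnion_mono fun k => Set.finset_sum_subset_finset_sum _ _ _ fun ℓ _ => ?_
      rintro t ⟨x, hx, y, hy, z, hz, rfl⟩
      refine ⟨x ⊗ₜ[ℝ] y, hUVsub ℓ ?_, z, hz, rfl⟩
      exact Set.mem_iUnion.mpr ⟨1, by
        rw [Finset.sum_range_one]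
        exact ⟨x, hx, y, hy, rfl⟩⟩
  have heq : O₃ = O₁₂ := IsTopologicalAddGroup.ext hO₃gp hO₁₂gp key
  subst heq
  exact ⟨continuous_id, IsOpenMap.id, Function.bijective_id⟩
end

section
/- For E = ℝ^ℕ with the product topology, the canonical linear bijection θ : (E ⊗ E) ⊗ E → E ⊗ (E ⊗ E) sending (x ⊗ y) ⊗ z to x ⊗ (y ⊗ z) is not continuous, where all tensor products carry the topology with 0-neighbourhood basis given by countable sums of images of products of balanced 0-neighbourhoods. -/
open scoped TensorProduct Pointwise
open Filter

set_option maxHeartbeats 1000000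
set_option synthInstance.maxHeartbeats 1000000

namespace Aux13

abbrev EE := ℕ → ℝ

/-! ### Boxes in `ℝ^ℕ` -/

def Box (n : ℕ) (ε : ℝ) : Set EE := {f | ∀ i < n, |f i| ≤ ε}

lemma box_mem_nhds {n : ℕ} {ε : ℝ} (hε : 0 < ε) : Box n ε ∈ nhds (0 : EE) := by
  have h : Box n ε = ⋂ i ∈ Finset.range n, (fun f : EE => f i) ⁻¹' Metric.closedBall 0 ε := by
    ext f
    simp [Box, Real.dist_eq]
  rw [h]
  refine (Filter.biInter_finset_mem (Finset.range n)).mpr fun i _ => ?_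
  exact (continuous_apply i).continuousAt.preimage_mem_nhds
    (by simpa using Metric.closedBall_mem_nhds (0:ℝ) hε)

lemma box_balanced {n : ℕ} {ε : ℝ} : Balanced ℝ (Box n ε) := by
  intro a ha x hx
  rcases hx with ⟨f, hf, rfl⟩
  intro i hi
  calc |(a • f) i| = |a| * |f i| := by simp [abs_mul]
    _ ≤ 1 * ε := by
        apply mul_le_mul (by simpa using ha) (hf i hi) (abs_nonneg _) zero_le_one
    _ = ε := one_mul ε

lemma exists_box_subset {A : Set EE} (hA : A ∈ nhds 0) :
    ∃ n : ℕ, ∃ ε : ℝ, 0 < ε ∧ Box n ε ⊆ A := by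
  obtain ⟨s, hsA, hso, hs0⟩ := mem_nhds_iff.mp hA
  obtain ⟨I, u, h1, h2⟩ := isOpen_pi_iff.mp hso 0 hs0
  have hchoice : ∀ i : ℕ, ∃ δ : ℝ, 0 < δ ∧ (i ∈ I → Metric.ball (0:ℝ) δ ⊆ u i) := by
    intro i
    by_cases hi : i ∈ I
    · obtain ⟨δ, hδ, hb⟩ := Metric.isOpen_iff.mp (h1 i hi).1 0 (h1 i hi).2
      exact ⟨δ, hδ, fun _ => hb⟩
    · exact ⟨1, one_pos, fun h => absurd h hi⟩
  choose δ hδpos hδ using hchoice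
  set n : ℕ := I.sup id + 1 with hn
  have hIn : ∀ i ∈ I, i < n := fun i hi => Nat.lt_succ_of_le (Finset.le_sup (f := id) hi)
  have hne : ((Finset.range n).image δ).Nonempty :=
    Finset.Nonempty.image ⟨0, Finset.mem_range.mpr (Nat.succ_pos _)⟩ _
  set εv : ℝ := ((Finset.range n).image δ).min' hne with hεv
  have hεvpos : 0 < εv := by
    obtain ⟨j, hj, hje⟩ := Finset.mem_image.mp (Finset.min'_mem ((Finset.range n).image δ) hne)
    rw [hεv, ← hje] at *
    exact hδpos j
  refine ⟨n, εv/2, by positivity, ?_⟩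
  intro f hf
  apply hsA
  apply h2
  rw [Set.mem_pi]
  intro i hi
  apply hδ i hi
  rw [Metric.mem_ball, Real.dist_eq, sub_zero]
  have h3 : |f i| ≤ εv/2 := hf i (hIn i hi)
  have h4 : εv ≤ δ i := by
    apply Finset.min'_le
    exact Finset.mem_image_of_mem δ (Finset.mem_range.mpr (hIn i hi))
  linarith

/-! ### Membership in finite sums of sets and in `sumBoxes` -/

lemma mem_finset_sum_sets {M : Type*} [AddCommMonoid M] {S : ℕ → Set M} {k : ℕ} {x : M}
    (hx : x ∈ ∑ ℓ ∈ Finset.range k, S ℓ) :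
    ∃ f : ℕ → M, (∀ ℓ < k, f ℓ ∈ S ℓ) ∧ x = ∑ ℓ ∈ Finset.range k, f ℓ := by
  induction k generalizing x with
  | zero => exact ⟨0, by simp, by simpa using hx⟩
  | succ k ih =>
    rw [Finset.sum_range_succ] at hx
    rcases Set.mem_add.mp hx with ⟨a, ha, b, hb, rfl⟩
    obtain ⟨f, hf, rfl⟩ := ih ha
    refine ⟨fun ℓ => if ℓ = k then b else f ℓ, ?_, ?_⟩
    · intro ℓ hℓ
      by_cases h : ℓ = k
      · subst h; simpa using hb
      · simpa [h] using hf ℓ (by omega)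
    · rw [Finset.sum_range_succ]
      simp only [if_pos rfl]
      congr 1
      exact Finset.sum_congr rfl (fun ℓ hℓ => by
        rw [if_neg]; exact fun h => by simp [h] at hℓ)

lemma sum_sets_mem {M : Type*} [AddCommMonoid M] {S : ℕ → Set M} {k : ℕ} {f : ℕ → M}
    (hf : ∀ ℓ < k, f ℓ ∈ S ℓ) : (∑ ℓ ∈ Finset.range k, f ℓ) ∈ ∑ ℓ ∈ Finset.range k, S ℓ := by
  induction k with
  | zero => simp
  | succ k ih =>
    rw [Finset.sum_range_succ, Finset.sum_range_succ]
    exact Set.add_mem_add (ih fun ℓ hℓ => hf ℓ (by omega)) (hf k (by omega))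

section TBlemmas
variable {E F : Type*} [AddCommGroup E] [Module ℝ E] [AddCommGroup F] [Module ℝ F]

lemma mem_sumBoxes_iff {U : ℕ → Set E} {V : ℕ → Set F} {z : E ⊗[ℝ] F} :
    z ∈ sumBoxes U V ↔ ∃ k : ℕ, ∃ u : ℕ → E, ∃ v : ℕ → F,
      (∀ ℓ < k, u ℓ ∈ U ℓ ∧ v ℓ ∈ V ℓ) ∧ z = ∑ ℓ ∈ Finset.range k, u ℓ ⊗ₜ[ℝ] v ℓ := by
  constructor
  · intro hz
    rcases Set.mem_iUnion.mp hz with ⟨k, hk⟩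
    obtain ⟨f, hf, rfl⟩ := mem_finset_sum_sets hk
    have hch : ∀ ℓ : ℕ, ∃ p : E × F, ℓ < k → (p.1 ∈ U ℓ ∧ p.2 ∈ V ℓ ∧ f ℓ = p.1 ⊗ₜ[ℝ] p.2) := by
      intro ℓ
      by_cases hℓ : ℓ < k
      · rcases hf ℓ hℓ with ⟨u, hu, v, hv, huv⟩
        exact ⟨(u, v), fun _ => ⟨hu, hv, huv.symm⟩⟩
      · exact ⟨(0,0), fun h => absurd h hℓ⟩
    choose p hp using hch
    refine ⟨k, fun ℓ => (p ℓ).1, fun ℓ => (p ℓ).2, fun ℓ hℓ => ⟨(hp ℓ hℓ).1, (hp ℓ hℓ).2.1⟩, ?_⟩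
    exact Finset.sum_congr rfl fun ℓ hℓ => (hp ℓ (Finset.mem_range.mp hℓ)).2.2
  · rintro ⟨k, u, v, h, rfl⟩
    apply Set.mem_iUnion.mpr ⟨k, ?_⟩
    exact sum_sets_mem fun ℓ hℓ => ⟨u ℓ, (h ℓ hℓ).1, v ℓ, (h ℓ hℓ).2, rfl⟩

lemma tensorBox_subset_sumBoxes {U : ℕ → Set E} {V : ℕ → Set F} :
    tensorBox (U 0) (V 0) ⊆ sumBoxes U V := by
  rintro z ⟨u, hu, v, hv, rfl⟩
  exact mem_sumBoxes_iff.mpr ⟨1, fun _ => u, fun _ => v, fun ℓ hℓ => by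
    interval_cases ℓ <;> exact ⟨hu, hv⟩, by simp⟩

lemma sumBoxes_balanced {U : ℕ → Set E} {V : ℕ → Set F} (hU : ∀ ℓ, Balanced ℝ (U ℓ)) :
    Balanced ℝ (sumBoxes U V) := by
  intro a ha z hz
  rcases hz with ⟨z, hz, rfl⟩
  obtain ⟨k, u, v, h, rfl⟩ := mem_sumBoxes_iff.mp hz
  show a • ∑ ℓ ∈ Finset.range k, u ℓ ⊗ₜ[ℝ] v ℓ ∈ sumBoxes U V
  rw [Finset.smul_sum]
  refine mem_sumBoxes_iff.mpr ⟨k, fun ℓ => a • u ℓ, v, fun ℓ hℓ => ⟨?_, (h ℓ hℓ).2⟩, ?_⟩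
  · exact hU ℓ a ha (Set.smul_mem_smul_set (h ℓ hℓ).1)
  · exact Finset.sum_congr rfl fun ℓ _ => by rw [TensorProduct.smul_tmul']

end TBlemmas

/-! ### Coordinate functionals on the tensor products -/

def ψbil (i j : ℕ) : EE →ₗ[ℝ] EE →ₗ[ℝ] ℝ :=
  LinearMap.mk₂ ℝ (fun f g => f i * g j)
    (fun f f' g => by simp [add_mul])
    (fun c f g => by simp [mul_assoc])
    (fun f g g' => by simp [mul_add])
    (fun c f g => by simp; ring)

noncomputable def ψ (i j : ℕ) : EE ⊗[ℝ] EE →ₗ[ℝ] ℝ := TensorProduct.lift (ψbil i j)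

@[simp] lemma ψ_tmul (i j : ℕ) (f g : EE) : ψ i j (f ⊗ₜ[ℝ] g) = f i * g j := by
  simp [ψ, ψbil]

noncomputable def Φbil (i j c : ℕ) : EE →ₗ[ℝ] (EE ⊗[ℝ] EE) →ₗ[ℝ] ℝ :=
  LinearMap.mk₂ ℝ (fun f τ => f i * ψ j c τ)
    (fun f f' τ => by simp [add_mul])
    (fun r f τ => by simp [mul_assoc])
    (fun f τ τ' => by simp [mul_add])
    (fun r f τ => by simp; ring)

noncomputable def Φ (i j c : ℕ) : EE ⊗[ℝ] (EE ⊗[ℝ] EE) →ₗ[ℝ] ℝ := TensorProduct.lift (Φbil i j c)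

@[simp] lemma Φ_tmul (i j c : ℕ) (f : EE) (τ : EE ⊗[ℝ] EE) :
    Φ i j c (f ⊗ₜ[ℝ] τ) = f i * ψ j c τ := by
  simp [Φ, Φbil]

/-! ### Corner bound -/

lemma psi_bound {g : ℕ} {εs : ℕ → ℝ} {C : ℝ}
    (hC : ∀ J : ℕ, (∑ j ∈ Finset.range J, (εs j)^2) ≤ C)
    {τ : EE ⊗[ℝ] EE}
    (hτ : τ ∈ sumBoxes (fun j => Box g (εs j)) (fun j => Box g (εs j)))
    {i₀ j₀ : ℕ} (hi : i₀ < g) (hj : j₀ < g) : |ψ i₀ j₀ τ| ≤ C := by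
  obtain ⟨J, cf, df, hcd, rfl⟩ := mem_sumBoxes_iff.mp hτ
  rw [map_sum]
  calc |∑ j ∈ Finset.range J, ψ i₀ j₀ (cf j ⊗ₜ[ℝ] df j)|
      ≤ ∑ j ∈ Finset.range J, |ψ i₀ j₀ (cf j ⊗ₜ[ℝ] df j)| := Finset.abs_sum_le_sum_abs _ _
    _ ≤ ∑ j ∈ Finset.range J, (εs j)^2 := by
        apply Finset.sum_le_sum
        intro j hjJ
        rw [ψ_tmul, abs_mul, sq]
        have h1 := (hcd j (Finset.mem_range.mp hjJ)).1 i₀ hi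
        have h2 := (hcd j (Finset.mem_range.mp hjJ)).2 j₀ hj
        have h0 : (0:ℝ) ≤ εs j := le_trans (abs_nonneg _) h1
        exact mul_le_mul h1 h2 (abs_nonneg _) h0
    _ ≤ C := hC J

lemma geom_aux (ℓ : ℕ) (J : ℕ) :
    (∑ j ∈ Finset.range J, (((1:ℝ)/2)^(ℓ+j+1))^2) ≤ ((1:ℝ)/2)^ℓ := by
  have hterm : ∀ j : ℕ, (((1:ℝ)/2)^(ℓ+j+1))^2 ≤ ((1:ℝ)/2)^ℓ * ((1:ℝ)/2)^(j+1) := by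
    intro j
    rw [← pow_mul, ← pow_add]
    apply pow_le_pow_of_le_one (by norm_num) (by norm_num)
    omega
  calc (∑ j ∈ Finset.range J, (((1:ℝ)/2)^(ℓ+j+1))^2)
      ≤ ∑ j ∈ Finset.range J, ((1:ℝ)/2)^ℓ * ((1:ℝ)/2)^(j+1) :=
        Finset.sum_le_sum fun j _ => hterm j
    _ = ((1:ℝ)/2)^ℓ * ∑ j ∈ Finset.range J, ((1:ℝ)/2)^(j+1) := by rw [Finset.mul_sum]
    _ ≤ ((1:ℝ)/2)^ℓ * 1 := by
        apply mul_le_mul_of_nonneg_left _ (by positivity)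
        have h1 : (∑ j ∈ Finset.range J, ((1:ℝ)/2)^(j+1))
            = (1/2) * ∑ j ∈ Finset.range J, ((1:ℝ)/2)^j := by
          rw [Finset.mul_sum]
          exact Finset.sum_congr rfl fun j _ => by ring
        rw [h1]
        have := sum_geometric_two_le J
        linarith
    _ = ((1:ℝ)/2)^ℓ := mul_one _

lemma pow_twopow_bound {s : ℕ} (hs : 4 ≤ s) : 100 * s < 36 * 2 ^ s := by
  induction s with
  | zero => omega
  | succ n ih =>
    by_cases h : 4 ≤ n
    · have := ih h
      have h2 : 100 ≤ 36 * 2 ^ n := by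
        calc (100:ℕ) ≤ 36 * 2^4 := by norm_num
          _ ≤ 36 * 2^n := by
              apply Nat.mul_le_mul_left
              exact Nat.pow_le_pow_right (by norm_num) h
      calc 100 * (n+1) = 100 * n + 100 := by ring
        _ < 36 * 2^n + 36 * 2^n := by omega
        _ = 36 * 2^(n+1) := by ring
    · interval_cases n <;> simp_all <;> omega

/-! ### Hadamard matrices -/

variable {s : ℕ}

def Had (x y : Fin s → Bool) : ℝ :=
  ∏ t : Fin s, (if x t && y t then (-1 : ℝ) else 1)

lemma Had_sq (x y : Fin s → Bool) : Had x y * Had x y = 1 := by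
  rw [Had, ← Finset.prod_mul_distrib]
  apply Finset.prod_eq_one
  intro t _
  by_cases h : x t && y t <;> simp [h]

lemma Had_abs (x y : Fin s → Bool) : |Had x y| ≤ 1 := by
  rw [Had, Finset.abs_prod]
  apply le_of_eq
  apply Finset.prod_eq_one
  intro t _
  by_cases h : x t && y t <;> simp [h]

lemma Had_card : Fintype.card (Fin s → Bool) = 2 ^ s := by
  simp

lemma Had_orth (b b' : Fin s → Bool) :
    ∑ a : Fin s → Bool, Had a b * Had a b'
      = if b = b' then ((2:ℝ)) ^ s else 0 := by
  have key : ∀ a : Fin s → Bool, Had a b * Had a b'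
      = ∏ t : Fin s, ((if a t && b t then (-1:ℝ) else 1) * (if a t && b' t then (-1:ℝ) else 1)) := by
    intro a; rw [Had, Had, ← Finset.prod_mul_distrib]
  have swap : (∑ a : Fin s → Bool, ∏ t : Fin s,
        ((if a t && b t then (-1:ℝ) else 1) * (if a t && b' t then (-1:ℝ) else 1)))
      = ∏ t : Fin s, ∑ c : Bool,
        ((if c && b t then (-1:ℝ) else 1) * (if c && b' t then (-1:ℝ) else 1)) := by
    rw [Finset.prod_univ_sum]
    rw [Fintype.piFinset_univ]
  have pert : ∀ t : Fin s, (∑ c : Bool,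
        ((if c && b t then (-1:ℝ) else 1) * (if c && b' t then (-1:ℝ) else 1)))
      = if b t = b' t then 2 else 0 := by
    intro t
    rw [Fintype.sum_bool]
    cases hb : b t <;> cases hb' : b' t <;> norm_num
  simp only [key]
  rw [swap]
  simp only [pert]
  by_cases hbb : b = b'
  · subst hbb
    simp
  · rw [if_neg hbb]
    have hex : ∃ t : Fin s, b t ≠ b' t := by
      by_contra h
      push_neg at h
      exact hbb (funext h)
    obtain ⟨t, ht⟩ := hex
    exact Finset.prod_eq_zero (Finset.mem_univ t) (by rw [if_neg ht])

/-! ### The linear-algebra core -/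

lemma LA {ι : Type*} [Fintype ι] [DecidableEq ι]
    (H S : ι → ι → ℝ) (Bd : Finset ℕ) (u w : ℕ → ι → ℝ)
    (horth : ∀ b b', ∑ a : ι, H a b * H a b' = if b = b' then (Fintype.card ι : ℝ) else 0)
    (hsq : ∀ a b, H a b * H a b = 1)
    (habs : ∀ a b, |H a b| ≤ 1)
    (hS : ∀ a b, |S a b| ≤ 2)
    (heq : ∀ a b, 8 * H a b = (∑ ℓ ∈ Bd, u ℓ a * w ℓ b) + S a b) :
    36 * (Fintype.card ι : ℝ) ≤ 100 * (Bd.card : ℝ) := by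
  classical
  by_cases hcard : Fintype.card ι = 0
  · rw [hcard]
    norm_num
  have hcpos : 0 < Fintype.card ι := Nat.pos_of_ne_zero hcard
  set σ : ℝ := (Fintype.card ι : ℝ) with hσ
  have hσpos : 0 < σ := by rw [hσ]; exact_mod_cast hcpos
  set R : ι → ι → ℝ := fun a b => ∑ ℓ ∈ Bd, u ℓ a * w ℓ b with hR
  have hRval : ∀ a b, R a b = 8 * H a b - S a b := by
    intro a b; have := heq a b; simp only [hR]; linarith
  have hRabs : ∀ a b, |R a b| ≤ 10 := by
    intro a b
    rw [hRval]
    have h1 : |8 * H a b| ≤ 8 := by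
      rw [abs_mul, abs_of_nonneg (by norm_num : (0:ℝ) ≤ 8)]
      nlinarith [habs a b, abs_nonneg (H a b)]
    calc |8 * H a b - S a b| ≤ |8 * H a b| + |S a b| := abs_sub _ _
      _ ≤ 8 + 2 := add_le_add h1 (hS a b)
      _ = 10 := by norm_num
  set wE : ℕ → EuclideanSpace ℝ ι := fun ℓ => WithLp.toLp 2 (fun b => w ℓ b : ι → ℝ) with hwE
  set V : Submodule ℝ (EuclideanSpace ℝ ι) := Submodule.span ℝ ↑(Bd.image wE) with hV
  set d : ℕ := Module.finrank ℝ V with hd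
  have hdle : d ≤ Bd.card := by
    have h1 : Set.finrank ℝ (↑(Bd.image wE) : Set (EuclideanSpace ℝ ι)) ≤ (Bd.image wE).card :=
      finrank_span_finset_le_card (Bd.image wE)
    have h2 : d = Set.finrank ℝ (↑(Bd.image wE) : Set (EuclideanSpace ℝ ι)) := rfl
    rw [h2]
    exact le_trans h1 Finset.card_image_le
  have hrv : ∀ a : ι, (WithLp.toLp 2 (fun b => R a b : ι → ℝ) : EuclideanSpace ℝ ι) ∈ V := by
    intro a
    have hsum : (WithLp.toLp 2 (fun b => R a b : ι → ℝ) : EuclideanSpace ℝ ι) = ∑ ℓ ∈ Bd, (u ℓ a) • wE ℓ := by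
      ext b
      have h4 : (∑ ℓ ∈ Bd, (u ℓ a) • wE ℓ) b = ∑ ℓ ∈ Bd, (u ℓ a) • (wE ℓ b) :=
        by rw [WithLp.ofLp_sum, Finset.sum_apply]; rfl
      rw [h4]
      simp only [hR, hwE, smul_eq_mul]
    rw [hsum]
    apply Submodule.sum_smul_mem
    intro ℓ hℓ
    exact Submodule.subset_span (Finset.mem_coe.mpr (Finset.mem_image_of_mem wE hℓ))
  set rv : ι → V := fun a => ⟨WithLp.toLp 2 (fun b => R a b : ι → ℝ), hrv a⟩ with hrvdef
  set ob := stdOrthonormalBasis ℝ V with hob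
  set c : ι → Fin d → ℝ := fun a i => ob.repr (rv a) i with hc
  set vE : Fin d → EuclideanSpace ℝ ι := fun i => ((ob i : V) : EuclideanSpace ℝ ι) with hvE
  have hexp : ∀ a b, R a b = ∑ i : Fin d, c a i * vE i b := by
    intro a b
    have h1 : (∑ i : Fin d, c a i • (ob i)) = rv a := ob.sum_repr (rv a)
    have h2 : ((∑ i : Fin d, c a i • (ob i) : V) : EuclideanSpace ℝ ι) = ∑ i : Fin d, c a i • vE i := by
      rw [Submodule.coe_sum]
      apply Finset.sum_congr rfl
      intro i _
      simp [hvE]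
    have h3 : ((rv a : V) : EuclideanSpace ℝ ι) b = R a b := rfl
    rw [← h3, ← h1, h2, WithLp.ofLp_sum, Finset.sum_apply]
    apply Finset.sum_congr rfl
    intro i _
    simp [PiLp.smul_apply, smul_eq_mul]
  have hpar : ∀ a, ∑ i : Fin d, (c a i)^2 = ∑ b : ι, (R a b)^2 := by
    intro a
    have h1 : (inner ℝ (ob.repr (rv a)) (ob.repr (rv a)) : ℝ) = inner ℝ (rv a) (rv a) :=
      ob.repr.inner_map_map (rv a) (rv a)
    have h2 : (inner ℝ (ob.repr (rv a)) (ob.repr (rv a)) : ℝ) = ∑ i : Fin d, (c a i)^2 := by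
      rw [PiLp.inner_apply]
      apply Finset.sum_congr rfl
      intro i _
      simp [hc, sq]
    have h3 : (inner ℝ (rv a) (rv a) : ℝ) = ∑ b : ι, (R a b)^2 := by
      rw [Submodule.coe_inner, PiLp.inner_apply]
      apply Finset.sum_congr rfl
      intro b _
      simp [sq, hrvdef]
    rw [← h2, h1, h3]
  have hnorm1 : ∀ i : Fin d, ∑ b : ι, (vE i b)^2 = 1 := by
    intro i
    have h1 : (inner ℝ (ob i) (ob i) : ℝ) = 1 := by
      rw [real_inner_self_eq_norm_sq, show ‖ob i‖ = 1 from ob.orthonormal.1 i]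
      norm_num
    have h2 : (inner ℝ (ob i) (ob i) : ℝ) = ∑ b : ι, (vE i b)^2 := by
      rw [Submodule.coe_inner, PiLp.inner_apply]
      apply Finset.sum_congr rfl
      intro b _
      simp [sq, hvE]
    rw [← h2, h1]
  have hHv : ∀ i : Fin d, ∑ a : ι, (∑ b : ι, H a b * vE i b)^2 = σ := by
    intro i
    have expand : ∀ a : ι, (∑ b : ι, H a b * vE i b)^2
        = ∑ b : ι, ∑ b' : ι, (vE i b * vE i b') * (H a b * H a b') := by
      intro a
      rw [sq, Finset.sum_mul_sum]
      apply Finset.sum_congr rfl; intro b _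
      apply Finset.sum_congr rfl; intro b' _
      ring
    simp only [expand]
    rw [Finset.sum_comm]
    have swap2 : ∀ b : ι, (∑ a : ι, ∑ b' : ι, (vE i b * vE i b') * (H a b * H a b'))
        = ∑ b' : ι, (vE i b * vE i b') * (∑ a : ι, H a b * H a b') := by
      intro b
      rw [Finset.sum_comm]
      apply Finset.sum_congr rfl; intro b' _
      rw [← Finset.mul_sum]
    simp only [swap2, horth]
    have collapse : ∀ b : ι, (∑ b' : ι, (vE i b * vE i b') * (if b = b' then σ else 0))
        = (vE i b)^2 * σ := by
      intro b
      rw [Finset.sum_eq_single b]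
      · simp [sq]
      · intro b' _ hne
        rw [if_neg (fun h => hne h.symm), mul_zero]
      · intro h; exact absurd (Finset.mem_univ b) h
    simp only [collapse]
    rw [← Finset.sum_mul, hnorm1 i, one_mul]
  set Sig : ℝ := ∑ a : ι, ∑ b : ι, H a b * R a b with hSig
  have hlow : 6 * σ^2 ≤ Sig := by
    have hterm : ∀ a b : ι, H a b * R a b = 8 - H a b * S a b := by
      intro a b
      rw [hRval]
      nlinarith [hsq a b]
    have hrw : Sig = ∑ a : ι, ∑ b : ι, ((8:ℝ) - H a b * S a b) := by
      rw [hSig]; simp only [hterm]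
    rw [hrw]
    have hbound : ∀ a b : ι, (6:ℝ) ≤ 8 - H a b * S a b := by
      intro a b
      have h1 : |H a b * S a b| ≤ 2 := by
        rw [abs_mul]
        calc |H a b| * |S a b| ≤ 1 * 2 :=
              mul_le_mul (habs a b) (hS a b) (abs_nonneg _) zero_le_one
          _ = 2 := one_mul 2
      linarith [(abs_le.mp h1).2]
    calc (6:ℝ) * σ^2 = ∑ _a : ι, ∑ _b : ι, (6:ℝ) := by
          simp [Finset.sum_const, hσ]; ring
      _ ≤ ∑ a : ι, ∑ b : ι, ((8:ℝ) - H a b * S a b) :=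
          Finset.sum_le_sum fun a _ => Finset.sum_le_sum fun b _ => hbound a b
  have hSignn : (0:ℝ) ≤ Sig := le_trans (by positivity) hlow
  have hform : Sig = ∑ p : ι × Fin d, (c p.1 p.2) * (∑ b : ι, H p.1 b * vE p.2 b) := by
    rw [hSig, Fintype.sum_prod_type]
    apply Finset.sum_congr rfl
    intro a _
    calc ∑ b : ι, H a b * R a b
        = ∑ b : ι, ∑ i : Fin d, c a i * (H a b * vE i b) := by
          apply Finset.sum_congr rfl; intro b _
          rw [hexp a b, Finset.mul_sum]
          apply Finset.sum_congr rfl; intro i _; ring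
      _ = ∑ i : Fin d, ∑ b : ι, c a i * (H a b * vE i b) := Finset.sum_comm
      _ = ∑ i : Fin d, c a i * (∑ b : ι, H a b * vE i b) := by
          apply Finset.sum_congr rfl; intro i _
          rw [← Finset.mul_sum]
  have hCS : Sig^2 ≤ (∑ p : ι × Fin d, (c p.1 p.2)^2)
      * (∑ p : ι × Fin d, (∑ b : ι, H p.1 b * vE p.2 b)^2) := by
    rw [hform]
    exact Finset.sum_mul_sq_le_sq_mul_sq Finset.univ _ _
  have hcsum : (∑ p : ι × Fin d, (c p.1 p.2)^2) ≤ 100 * σ^2 := by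
    rw [Fintype.sum_prod_type]
    have h1 : ∀ a : ι, ∑ i : Fin d, (c a i)^2 ≤ 100 * σ := by
      intro a
      rw [hpar a]
      calc ∑ b : ι, (R a b)^2 ≤ ∑ _b : ι, (100:ℝ) := by
            apply Finset.sum_le_sum
            intro b _
            have h10 := abs_le.mp (hRabs a b)
            nlinarith [h10.1, h10.2]
        _ = 100 * σ := by simp [hσ]; ring
    calc ∑ a : ι, ∑ i : Fin d, (c a i)^2 ≤ ∑ _a : ι, 100 * σ :=
          Finset.sum_le_sum fun a _ => h1 a
      _ = 100 * σ^2 := by simp [hσ]; ring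
  have hgsum : (∑ p : ι × Fin d, (∑ b : ι, H p.1 b * vE p.2 b)^2) = σ * d := by
    rw [Fintype.sum_prod_type_right]
    calc ∑ i : Fin d, ∑ a : ι, (∑ b : ι, H a b * vE i b)^2
        = ∑ _i : Fin d, σ := Finset.sum_congr rfl fun i _ => hHv i
      _ = σ * d := by simp [mul_comm]
  have hfinal : 36 * σ^4 ≤ 100 * σ^3 * d := by
    have h1 : Sig^2 ≤ (100 * σ^2) * (σ * d) :=
      le_trans hCS (by
        apply mul_le_mul hcsum (le_of_eq hgsum) (by positivity) (by positivity))
    nlinarith [hlow, hSignn, hσpos]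
  have h36 : 36 * σ ≤ 100 * (d:ℝ) := by
    have hσ3 : (0:ℝ) < σ^3 := by positivity
    nlinarith [hfinal, hσ3]
  calc 36 * σ ≤ 100 * (d:ℝ) := h36
    _ ≤ 100 * (Bd.card : ℝ) := by
        have : (d:ℝ) ≤ (Bd.card : ℝ) := by exact_mod_cast hdle
        linarith


end Aux13
open Aux13 in
/-- For E = ℝ^ℕ with the product topology, the canonical linear bijection
θ : (E ⊗ E) ⊗ E → E ⊗ (E ⊗ E) sending (x ⊗ y) ⊗ z to x ⊗ (y ⊗ z) is not continuous,
where all tensor products carry the tensor product topology of the construction. -/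
theorem stmt_13
    (O₂ : TopologicalSpace ((ℕ → ℝ) ⊗[ℝ] (ℕ → ℝ)))
    (hO₂ : IsTensorTopology (ℕ → ℝ) (ℕ → ℝ) O₂)
    (OL : TopologicalSpace (((ℕ → ℝ) ⊗[ℝ] (ℕ → ℝ)) ⊗[ℝ] (ℕ → ℝ)))
    (hOL : @IsTensorTopology ((ℕ → ℝ) ⊗[ℝ] (ℕ → ℝ)) (ℕ → ℝ) _ _ O₂ _ _ _ OL)
    (OR : TopologicalSpace ((ℕ → ℝ) ⊗[ℝ] ((ℕ → ℝ) ⊗[ℝ] (ℕ → ℝ))))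
    (hOR : @IsTensorTopology (ℕ → ℝ) ((ℕ → ℝ) ⊗[ℝ] (ℕ → ℝ)) _ _ _ _ _ O₂ OR) :
    ¬ @Continuous _ _ OL OR (TensorProduct.assoc ℝ (ℕ → ℝ) (ℕ → ℝ) (ℕ → ℝ)) := by
  intro hc
  classical
  letI : TopologicalSpace ((ℕ → ℝ) ⊗[ℝ] (ℕ → ℝ)) := O₂
  letI : TopologicalSpace (((ℕ → ℝ) ⊗[ℝ] (ℕ → ℝ)) ⊗[ℝ] (ℕ → ℝ)) := OL
  letI : TopologicalSpace ((ℕ → ℝ) ⊗[ℝ] ((ℕ → ℝ) ⊗[ℝ] (ℕ → ℝ))) := OR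
  -- the right-hand-side neighbourhood data
  set Useq : ℕ → Set EE := fun ℓ => Box (2^ℓ) 1 with hUseq
  set Cseq : ℕ → ℕ → Set EE := fun ℓ j => Box (2^ℓ) (((1:ℝ)/2)^(ℓ+j+1)) with hCseq
  set Wseq : ℕ → Set (EE ⊗[ℝ] EE) := fun ℓ => sumBoxes (Cseq ℓ) (Cseq ℓ) with hWseq
  have hCvalid : ∀ ℓ j, Cseq ℓ j ∈ nhds (0:EE) ∧ Balanced ℝ (Cseq ℓ j) := by
    intro ℓ j
    exact ⟨box_mem_nhds (by positivity), box_balanced⟩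
  have hWnhds : ∀ ℓ, Wseq ℓ ∈ @nhds _ O₂ 0 := by
    intro ℓ
    exact hO₂.2.2.mem_of_mem (i := (Cseq ℓ, Cseq ℓ)) ⟨hCvalid ℓ, hCvalid ℓ⟩
  have hN : sumBoxes Useq Wseq ∈ @nhds _ OR 0 := by
    refine hOR.2.2.mem_of_mem (i := (Useq, Wseq)) ⟨?_, ?_⟩
    · intro k
      exact ⟨box_mem_nhds one_pos, box_balanced⟩
    · intro k
      exact ⟨hWnhds k, sumBoxes_balanced (fun j => box_balanced)⟩
  -- pull back along θ
  have h0 : (TensorProduct.assoc ℝ (ℕ → ℝ) (ℕ → ℝ) (ℕ → ℝ))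
      (0 : ((ℕ → ℝ) ⊗[ℝ] (ℕ → ℝ)) ⊗[ℝ] (ℕ → ℝ)) = 0 :=
    (TensorProduct.assoc ℝ (ℕ → ℝ) (ℕ → ℝ) (ℕ → ℝ)).map_zero
  have hpre : (⇑(TensorProduct.assoc ℝ (ℕ → ℝ) (ℕ → ℝ) (ℕ → ℝ))) ⁻¹' (sumBoxes Useq Wseq)
      ∈ @nhds _ OL 0 := by
    apply hc.continuousAt.preimage_mem_nhds
    rw [h0]
    exact hN
  obtain ⟨⟨W, Vs⟩, ⟨hW, hVs⟩, hsub⟩ := hOL.2.2.mem_iff.mp hpre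
  obtain ⟨⟨As, Bs⟩, ⟨hAs, hBs⟩, hABsub⟩ := hO₂.2.2.mem_iff.mp (hW 0).1
  -- extract boxes from the left-hand-side data
  choose nA εA hεA hsubA using fun m => exists_box_subset (hAs m).1
  choose nB εB hεB hsubB using fun m => exists_box_subset (hBs m).1
  obtain ⟨nV, εV, hεV, hsubV⟩ := exists_box_subset (hVs 0).1
  set r : ℕ := nV with hrdef
  set s : ℕ := max (r+1) 4 with hsdef
  have hs4 : 4 ≤ s := le_max_right _ _
  have hrs : r < s := lt_of_lt_of_le (Nat.lt_succ_self r) (le_max_left _ _)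
  have hcardB : Fintype.card (Fin s → Bool) = 2^s := Had_card
  set eB : (Fin s → Bool) ≃ Fin (2^s) := (Fintype.equivFin _).trans (finCongr hcardB) with heB
  set ι : (Fin s → Bool) → ℕ := fun b => (eB b : ℕ) with hι
  have hιlt : ∀ b, ι b < 2^s := fun b => (eB b).isLt
  have hιinj : Function.Injective ι := fun b b' h => eB.injective (Fin.ext h)
  -- minimal radii
  have hneA : ((Finset.range (2^s)).image εA).Nonempty :=
    Finset.Nonempty.image ⟨0, Finset.mem_range.mpr (Nat.two_pow_pos s)⟩ _
  have hneB : ((Finset.range (2^s)).image εB).Nonempty :=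
    Finset.Nonempty.image ⟨0, Finset.mem_range.mpr (Nat.two_pow_pos s)⟩ _
  set ρ : ℝ := ((Finset.range (2^s)).image εA).min' hneA with hρdef
  set ρ' : ℝ := ((Finset.range (2^s)).image εB).min' hneB with hρ'def
  have hρpos : 0 < ρ := by
    obtain ⟨j, hj, hje⟩ := Finset.mem_image.mp
      (Finset.min'_mem ((Finset.range (2^s)).image εA) hneA)
    rw [hρdef, ← hje]
    exact hεA j
  have hρ'pos : 0 < ρ' := by
    obtain ⟨j, hj, hje⟩ := Finset.mem_image.mp
      (Finset.min'_mem ((Finset.range (2^s)).image εB) hneB)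
    rw [hρ'def, ← hje]
    exact hεB j
  have hρle : ∀ m < 2^s, ρ ≤ εA m := fun m hm =>
    Finset.min'_le _ _ (Finset.mem_image_of_mem εA (Finset.mem_range.mpr hm))
  have hρ'le : ∀ m < 2^s, ρ' ≤ εB m := fun m hm =>
    Finset.min'_le _ _ (Finset.mem_image_of_mem εB (Finset.mem_range.mpr hm))
  -- the left-hand-side element
  set aa : (Fin s → Bool) → EE :=
    fun m i => if h : i < 2^s then ρ * Had (eB.symm ⟨i, h⟩) m else 0 with haa
  set bb : (Fin s → Bool) → EE := fun m i => if i = ι m then ρ' else 0 with hbb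
  set vv : EE := fun i => if i = r then 8/(ρ*ρ') else 0 with hvv
  have haabound : ∀ m i, |aa m i| ≤ ρ := by
    intro m i
    simp only [haa]
    by_cases h : i < 2^s
    · rw [dif_pos h, abs_mul, abs_of_pos hρpos]
      calc ρ * |Had (eB.symm ⟨i, h⟩) m| ≤ ρ * 1 :=
            mul_le_mul_of_nonneg_left (Had_abs _ _) (le_of_lt hρpos)
        _ = ρ := mul_one ρ
    · rw [dif_neg h]
      simp [le_of_lt hρpos]
  have hbbbound : ∀ m i, |bb m i| ≤ ρ' := by
    intro m i
    simp only [hbb]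
    by_cases h : i = ι m
    · rw [if_pos h, abs_of_pos hρ'pos]
    · rw [if_neg h]
      simp [le_of_lt hρ'pos]
  set ω : EE ⊗[ℝ] EE := ∑ m : Fin s → Bool, aa m ⊗ₜ[ℝ] bb m with hω
  have hωmem : ω ∈ sumBoxes As Bs := by
    apply mem_sumBoxes_iff.mpr
    refine ⟨2^s, fun ℓ => if h : ℓ < 2^s then aa (eB.symm ⟨ℓ, h⟩) else 0,
            fun ℓ => if h : ℓ < 2^s then bb (eB.symm ⟨ℓ, h⟩) else 0, ?_, ?_⟩
    · intro ℓ hℓ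
      simp only [dif_pos hℓ]
      constructor
      · apply hsubA ℓ
        intro i hi
        exact le_trans (haabound _ i) (hρle ℓ hℓ)
      · apply hsubB ℓ
        intro i hi
        exact le_trans (hbbbound _ i) (hρ'le ℓ hℓ)
    · rw [Finset.sum_range
        (f := fun ℓ => (if h : ℓ < 2^s then aa (eB.symm ⟨ℓ, h⟩) else 0) ⊗ₜ[ℝ]
                       (if h : ℓ < 2^s then bb (eB.symm ⟨ℓ, h⟩) else 0))]
      rw [hω, ← Equiv.sum_comp eB.symm (fun m => aa m ⊗ₜ[ℝ] bb m)]
      apply Finset.sum_congr rfl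
      intro i _
      simp only [dif_pos i.isLt, Fin.eta]
  have hvvmem : vv ∈ Vs 0 := by
    apply hsubV
    intro i hi
    simp only [hvv]
    rw [if_neg (by simp only [hrdef]; omega)]
    simp [le_of_lt hεV]
  set y : ((ℕ → ℝ) ⊗[ℝ] (ℕ → ℝ)) ⊗[ℝ] (ℕ → ℝ) := ω ⊗ₜ[ℝ] vv with hy
  have hymem : y ∈ sumBoxes W Vs :=
    tensorBox_subset_sumBoxes ⟨ω, hABsub hωmem, vv, hvvmem, rfl⟩
  have hθy : (TensorProduct.assoc ℝ (ℕ → ℝ) (ℕ → ℝ) (ℕ → ℝ)) y ∈ sumBoxes Useq Wseq :=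
    hsub hymem
  obtain ⟨k, u, τf, humem, hrep⟩ := mem_sumBoxes_iff.mp hθy
  -- the window equation
  have hwindow : ∀ a b : Fin s → Bool,
      8 * Had a b = ∑ ℓ ∈ Finset.range k, u ℓ (ι a) * ψ (ι b) r (τf ℓ) := by
    intro a b
    have hθyeq : (TensorProduct.assoc ℝ (ℕ → ℝ) (ℕ → ℝ) (ℕ → ℝ)) y
        = ∑ m : Fin s → Bool, aa m ⊗ₜ[ℝ] (bb m ⊗ₜ[ℝ] vv) := by
      rw [hy, hω, TensorProduct.sum_tmul, map_sum]
      exact Finset.sum_congr rfl fun m _ => TensorProduct.assoc_tmul _ _ _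
    have hL : Φ (ι a) (ι b) r ((TensorProduct.assoc ℝ (ℕ → ℝ) (ℕ → ℝ) (ℕ → ℝ)) y)
        = 8 * Had a b := by
      rw [hθyeq, map_sum]
      have hterm : ∀ m : Fin s → Bool, Φ (ι a) (ι b) r (aa m ⊗ₜ[ℝ] (bb m ⊗ₜ[ℝ] vv))
          = aa m (ι a) * (bb m (ι b) * vv r) := by
        intro m
        rw [Φ_tmul, ψ_tmul]
      rw [Finset.sum_congr rfl fun m _ => hterm m]
      have haaval : ∀ m, aa m (ι a) = ρ * Had a m := by
        intro m
        simp only [haa]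
        rw [dif_pos (hιlt a)]
        congr 2
        have h1 : (⟨ι a, hιlt a⟩ : Fin (2^s)) = eB a := rfl
        rw [h1, Equiv.symm_apply_apply]
      have hvvr : vv r = 8/(ρ*ρ') := by simp only [hvv]; simp
      rw [Finset.sum_eq_single b]
      · rw [haaval, hvvr, hbb]
        simp only [if_pos rfl, if_true]
        field_simp
      · intro m _ hm
        have hne : ι b ≠ ι m := fun h => hm (hιinj h).symm
        simp only [hbb]
        simp only [if_neg hne]
        ring
      · intro h
        exact absurd (Finset.mem_univ b) h
    have hR : Φ (ι a) (ι b) r ((TensorProduct.assoc ℝ (ℕ → ℝ) (ℕ → ℝ) (ℕ → ℝ)) y)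
        = ∑ ℓ ∈ Finset.range k, u ℓ (ι a) * ψ (ι b) r (τf ℓ) := by
      rw [hrep, map_sum]
      exact Finset.sum_congr rfl fun ℓ _ => Φ_tmul _ _ _ _ _
    rw [← hL, hR]
  -- split into small and large indices
  set Bd : Finset ℕ := (Finset.range k).filter (fun ℓ => ℓ < s) with hBd
  set Gd : Finset ℕ := (Finset.range k).filter (fun ℓ => ¬ ℓ < s) with hGd
  set uh : ℕ → (Fin s → Bool) → ℝ := fun ℓ a => u ℓ (ι a) with huh
  set wh : ℕ → (Fin s → Bool) → ℝ := fun ℓ b => ψ (ι b) r (τf ℓ) with hwh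
  set Sgood : (Fin s → Bool) → (Fin s → Bool) → ℝ :=
    fun a b => ∑ ℓ ∈ Gd, uh ℓ a * wh ℓ b with hSgood
  have heqLA : ∀ a b, 8 * Had a b = (∑ ℓ ∈ Bd, uh ℓ a * wh ℓ b) + Sgood a b := by
    intro a b
    rw [hwindow a b, hSgood, hBd, hGd]
    exact (Finset.sum_filter_add_sum_filter_not (Finset.range k) (fun ℓ => ℓ < s) _).symm
  have hSbound : ∀ a b, |Sgood a b| ≤ 2 := by
    intro a b
    simp only [hSgood]
    calc |∑ ℓ ∈ Gd, uh ℓ a * wh ℓ b| ≤ ∑ ℓ ∈ Gd, |uh ℓ a * wh ℓ b| :=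
          Finset.abs_sum_le_sum_abs _ _
      _ ≤ ∑ ℓ ∈ Gd, ((1:ℝ)/2)^ℓ := by
          apply Finset.sum_le_sum
          intro ℓ hℓ
          rw [hGd, Finset.mem_filter, Finset.mem_range] at hℓ
          obtain ⟨hℓk, hℓs⟩ := hℓ
          have hsℓ : s ≤ ℓ := by omega
          have hu : |uh ℓ a| ≤ 1 := by
            simp only [huh]
            apply (humem ℓ hℓk).1
            calc ι a < 2^s := hιlt a
              _ ≤ 2^ℓ := Nat.pow_le_pow_right (by norm_num) hsℓ
          have hw : |wh ℓ b| ≤ ((1:ℝ)/2)^ℓ := by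
            simp only [hwh]
            apply psi_bound (geom_aux ℓ) (humem ℓ hℓk).2
            · calc ι b < 2^s := hιlt b
                _ ≤ 2^ℓ := Nat.pow_le_pow_right (by norm_num) hsℓ
            · calc r < s := hrs
                _ ≤ ℓ := hsℓ
                _ < 2^ℓ := Nat.lt_two_pow_self
          calc |uh ℓ a * wh ℓ b| = |uh ℓ a| * |wh ℓ b| := abs_mul _ _
            _ ≤ 1 * ((1:ℝ)/2)^ℓ := by
                apply mul_le_mul hu hw (abs_nonneg _) zero_le_one
            _ = ((1:ℝ)/2)^ℓ := one_mul _
      _ ≤ ∑ ℓ ∈ Finset.range k, ((1:ℝ)/2)^ℓ := by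
          apply Finset.sum_le_sum_of_subset_of_nonneg
          · rw [hGd]; exact Finset.filter_subset _ _
          · intro ℓ _ _; positivity
      _ ≤ 2 := sum_geometric_two_le k
  have horth' : ∀ b b' : Fin s → Bool, ∑ a : Fin s → Bool, Had a b * Had a b'
      = if b = b' then (Fintype.card (Fin s → Bool) : ℝ) else 0 := by
    intro b b'
    rw [Had_orth]
    by_cases h : b = b'
    · rw [if_pos h, if_pos h, hcardB]
      push_cast
      ring
    · rw [if_neg h, if_neg h]
  have hLA := LA Had Sgood Bd uh wh horth' Had_sq Had_abs hSbound heqLA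
  have hBdcard : Bd.card ≤ s := by
    have hsubBd : Bd ⊆ Finset.range s := by
      intro ℓ hℓ
      rw [hBd, Finset.mem_filter] at hℓ
      exact Finset.mem_range.mpr hℓ.2
    calc Bd.card ≤ (Finset.range s).card := Finset.card_le_card hsubBd
      _ = s := Finset.card_range s
  have hnum := pow_twopow_bound hs4
  have hcast1 : (Fintype.card (Fin s → Bool) : ℝ) = ((2^s : ℕ) : ℝ) := by
    rw [hcardB]
  rw [hcast1] at hLA
  have hcast2 : (100:ℝ) * (Bd.card : ℝ) ≤ 100 * (s:ℝ) := by
    have : (Bd.card : ℝ) ≤ (s : ℝ) := by exact_mod_cast hBdcard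
    linarith
  have hcast3 : ((100 * s : ℕ) : ℝ) < ((36 * 2^s : ℕ) : ℝ) := Nat.cast_lt.mpr hnum
  push_cast at hcast3 hLA hcast2
  linarith
end

section
/- Let E = ℝ^ℕ with product topology and N ∈ ℕ. If v ∈ ℝ^N ⊗ ℝ^N can, for every R > 0, be written as R⁻¹ ∑_{n,k} c_{n,k} u_n ⊗ v_{n,k} where for all n > N/2 one has sup_i |u_n(i)| < 2^{-n}, sup_j |v_{n,k}(j)| < 2^{-k}, |c_{n,k}| < 1, and the terms with n ≤ N/2 combine into a sum of N/2 elementary tensors, then v lies in the closure of the set of sums of at most N/2 elementary tensors in ℝ^N ⊗ ℝ^N ≅ ℝ^{N²}. -/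
open scoped TensorProduct

/-- If v ∈ ℝ^N ⊗ ℝ^N can, for every R > 0, be written as R⁻¹ ∑_{n,k} c_{n,k} uₙ ⊗ v_{n,k}
where for all n > N/2 one has |uₙ(i)| < 2⁻ⁿ, |v_{n,k}(j)| < 2⁻ᵏ and |c_{n,k}| < 1, and the
terms with n ≤ N/2 combine into a sum of N/2 elementary tensors, then v lies in the closure
(in M_N(ℝ) ≅ ℝ^{N²}, under the canonical identification Φ) of the set of sums of at most
N/2 elementary tensors. -/
theorem stmt_14 (N : ℕ)
    (Φ : ((Fin N → ℝ) ⊗[ℝ] (Fin N → ℝ)) →ₗ[ℝ] Matrix (Fin N) (Fin N) ℝ)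
    (hΦ : ∀ x y : Fin N → ℝ, Φ (x ⊗ₜ[ℝ] y) = Matrix.vecMulVec x y)
    (v : (Fin N → ℝ) ⊗[ℝ] (Fin N → ℝ))
    (hv : ∀ R : ℝ, 0 < R →
      ∃ (s : Finset (ℕ × ℕ)) (c : ℕ × ℕ → ℝ) (u : ℕ → Fin N → ℝ)
        (w : ℕ × ℕ → Fin N → ℝ),
        v = R⁻¹ • ∑ p ∈ s, c p • (u p.1 ⊗ₜ[ℝ] w p) ∧
        (∀ p ∈ s, N / 2 < p.1 →
          (∀ i, |u p.1 i| < (2 : ℝ) ^ (-(p.1 : ℤ))) ∧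
          (∀ j, |w p j| < (2 : ℝ) ^ (-(p.2 : ℤ))) ∧
          |c p| < 1) ∧
        (∃ a b : Fin (N / 2) → Fin N → ℝ,
          R⁻¹ • ∑ p ∈ s.filter (fun p => p.1 ≤ N / 2), c p • (u p.1 ⊗ₜ[ℝ] w p) =
            ∑ m : Fin (N / 2), a m ⊗ₜ[ℝ] b m)) :
    Φ v ∈ closure {M : Matrix (Fin N) (Fin N) ℝ |
      ∃ a b : Fin (N / 2) → Fin N → ℝ,
        M = ∑ m : Fin (N / 2), Matrix.vecMulVec (a m) (b m)} := by
  -- the set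
  set S : Set (Matrix (Fin N) (Fin N) ℝ) :=
    {M | ∃ a b : Fin (N / 2) → Fin N → ℝ,
      M = ∑ m : Fin (N / 2), Matrix.vecMulVec (a m) (b m)} with hS
  -- summable geometric double series
  have hgeo : Summable (fun n : ℕ => ((2:ℝ)⁻¹)^n) :=
    summable_geometric_of_lt_one (by norm_num) (by norm_num)
  have hsum : Summable (fun p : ℕ × ℕ => ((2:ℝ)⁻¹)^p.1 * ((2:ℝ)⁻¹)^p.2) :=
    hgeo.mul_of_nonneg hgeo (fun _ => by positivity) (fun _ => by positivity)
  set C : ℝ := ∑' p : ℕ × ℕ, ((2:ℝ)⁻¹)^p.1 * ((2:ℝ)⁻¹)^p.2 with hC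
  -- main approximations
  have H : ∀ n : ℕ, ∃ M ∈ S, ∀ i j, |Φ v i j - M i j| ≤ ((n : ℝ) + 1)⁻¹ * C := by
    intro n
    have hRpos : (0:ℝ) < (n : ℝ) + 1 := by positivity
    obtain ⟨s, c, u, w, hveq, htail, a, b, hlow⟩ := hv ((n : ℝ) + 1) hRpos
    refine ⟨∑ m : Fin (N / 2), Matrix.vecMulVec (a m) (b m), ⟨a, b, rfl⟩, ?_⟩
    intro i j
    -- express Φ v
    have hΦv : Φ v = ((n : ℝ) + 1)⁻¹ •
        ∑ p ∈ s, c p • Matrix.vecMulVec (u p.1) (w p) := by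
      rw [hveq, map_smul, map_sum]
      simp only [map_smul, hΦ]
    have hΦlow : ((n : ℝ) + 1)⁻¹ •
        ∑ p ∈ s.filter (fun p => p.1 ≤ N / 2), c p • Matrix.vecMulVec (u p.1) (w p) =
        ∑ m : Fin (N / 2), Matrix.vecMulVec (a m) (b m) := by
      have := congrArg Φ hlow
      rw [map_smul, map_sum, map_sum] at this
      simp only [map_smul, hΦ] at this
      exact this
    have hsplit : Φ v - ∑ m : Fin (N / 2), Matrix.vecMulVec (a m) (b m) =
        ((n : ℝ) + 1)⁻¹ •
          ∑ p ∈ s.filter (fun p => ¬ p.1 ≤ N / 2), c p • Matrix.vecMulVec (u p.1) (w p) := by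
      rw [hΦv, ← hΦlow, ← smul_sub]
      congr 1
      rw [← Finset.sum_filter_add_sum_filter_not s (fun p => p.1 ≤ N / 2)]
      abel
    have hentry : Φ v i j - (∑ m : Fin (N / 2), Matrix.vecMulVec (a m) (b m)) i j =
        ((n : ℝ) + 1)⁻¹ *
          ∑ p ∈ s.filter (fun p => ¬ p.1 ≤ N / 2), c p * (u p.1 i * w p j) := by
      have := congrFun (congrFun hsplit i) j
      simp only [Matrix.sub_apply, Matrix.smul_apply, Matrix.sum_apply,
        Matrix.vecMulVec_apply, smul_eq_mul] at this
      simp only [Matrix.sum_apply, Matrix.vecMulVec_apply]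
      exact this
    rw [hentry, abs_mul, abs_inv, abs_of_pos hRpos]
    refine mul_le_mul_of_nonneg_left ?_ (by positivity)
    calc |∑ p ∈ s.filter (fun p => ¬ p.1 ≤ N / 2), c p * (u p.1 i * w p j)|
        ≤ ∑ p ∈ s.filter (fun p => ¬ p.1 ≤ N / 2), |c p * (u p.1 i * w p j)| :=
          Finset.abs_sum_le_sum_abs _ _
      _ ≤ ∑ p ∈ s.filter (fun p => ¬ p.1 ≤ N / 2), ((2:ℝ)⁻¹)^p.1 * ((2:ℝ)⁻¹)^p.2 := by
          refine Finset.sum_le_sum (fun p hp => ?_)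
          rw [Finset.mem_filter] at hp
          obtain ⟨hu, hw, hc⟩ := htail p hp.1 (lt_of_not_ge hp.2)
          have h2 : ((2:ℝ))^(-(p.1 : ℤ)) = ((2:ℝ)⁻¹)^p.1 := by
            rw [zpow_neg, zpow_natCast, inv_pow]
          have h2' : ((2:ℝ))^(-(p.2 : ℤ)) = ((2:ℝ)⁻¹)^p.2 := by
            rw [zpow_neg, zpow_natCast, inv_pow]
          have hui := hu i; have hwj := hw j
          rw [h2] at hui; rw [h2'] at hwj
          calc |c p * (u p.1 i * w p j)| = |c p| * (|u p.1 i| * |w p j|) := by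
                rw [abs_mul, abs_mul]
            _ ≤ 1 * (((2:ℝ)⁻¹)^p.1 * ((2:ℝ)⁻¹)^p.2) := by
                refine mul_le_mul hc.le ?_ (by positivity) zero_le_one
                exact mul_le_mul hui.le hwj.le (abs_nonneg _) (by positivity)
            _ = ((2:ℝ)⁻¹)^p.1 * ((2:ℝ)⁻¹)^p.2 := one_mul _
      _ ≤ C := Summable.sum_le_tsum _ (fun p _ => by positivity) hsum
  choose M hMS hMb using H
  refine mem_closure_of_tendsto (f := M) (b := Filter.atTop) ?_ (Filter.Eventually.of_forall hMS)
  apply tendsto_pi_nhds.2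
  intro i
  rw [tendsto_pi_nhds]
  intro j
  have h0 : Filter.Tendsto (fun n : ℕ => ((n : ℝ) + 1)⁻¹ * C) Filter.atTop (nhds 0) := by
    have := tendsto_one_div_add_atTop_nhds_zero_nat (𝕜 := ℝ)
    simpa [one_div] using this.mul_const C
  have hsq : Filter.Tendsto (fun n : ℕ => Φ v i j - M n i j) Filter.atTop (nhds 0) := by
    apply squeeze_zero_norm (fun n => hMb n i j) h0
  have := hsq.const_sub (Φ v i j)
  simpa using this
end

section
/- Let E₁, E₂ be real topological vector spaces. If B is a balanced bounded 0-neighbourhood of E₂ then the sets ∑_{n∈ℕ} U_n ⊗ (t_n B) with U_n balanced 0-neighbourhoods in E₁ and t_n ∈ ℝ^× coincide with the sets ∑_{n∈ℕ} (t_n U_n) ⊗ B, and the sets ∑_{n∈ℕ} W_n ⊗ B with W_n balanced 0-neighbourhoods in E₁ form a basis of 0-neighbourhoods for the tensor product topology on E₁ ⊗ E₂. -/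
open scoped TensorProduct Pointwise
open Filter

private lemma tensorBox_smul_comm {E F : Type*} [AddCommGroup E] [Module ℝ E]
    [AddCommGroup F] [Module ℝ F] (c : ℝ) (U : Set E) (V : Set F) :
    tensorBox U (c • V) = tensorBox (c • U) V := by
  unfold tensorBox
  rw [show c • V = (fun v => c • v) '' V from rfl, show c • U = (fun u => c • u) '' U from rfl,
    Set.image2_image_right, Set.image2_image_left]
  simp only [TensorProduct.smul_tmul]

private lemma sum_sets_mono {G : Type*} [AddCommGroup G] {S T : ℕ → Set G}
    (h : ∀ n, S n ⊆ T n) (k : ℕ) :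
    (∑ ℓ ∈ Finset.range k, S ℓ) ⊆ ∑ ℓ ∈ Finset.range k, T ℓ := by
  induction k with
  | zero => simp
  | succ k ih =>
    rw [Finset.sum_range_succ, Finset.sum_range_succ]
    exact Set.add_subset_add ih (h k)

private lemma sumBoxes_mono {E F : Type*} [AddCommGroup E] [Module ℝ E]
    [AddCommGroup F] [Module ℝ F] {U U' : ℕ → Set E} {V V' : ℕ → Set F}
    (h : ∀ n, tensorBox (U n) (V n) ⊆ tensorBox (U' n) (V' n)) :
    sumBoxes U V ⊆ sumBoxes U' V' :=
  Set.iUnion_mono fun k => sum_sets_mono h k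

private lemma sumBoxes_congr {E F : Type*} [AddCommGroup E] [Module ℝ E]
    [AddCommGroup F] [Module ℝ F] {U U' : ℕ → Set E} {V V' : ℕ → Set F}
    (h : ∀ n, tensorBox (U n) (V n) = tensorBox (U' n) (V' n)) :
    sumBoxes U V = sumBoxes U' V' :=
  Set.Subset.antisymm (sumBoxes_mono fun n => (h n).le) (sumBoxes_mono fun n => (h n).ge)

/-- If B is a balanced bounded 0-neighbourhood of E₂, then the sets
∑ₙ Uₙ ⊗ (tₙB) coincide with the sets ∑ₙ (tₙUₙ) ⊗ B, and the sets ∑ₙ Wₙ ⊗ B with Wₙ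
balanced 0-neighbourhoods in E₁ form a basis of 0-neighbourhoods of the tensor product
topology on E₁ ⊗ E₂. -/
theorem stmt_16 {E₁ E₂ : Type*}
    [AddCommGroup E₁] [Module ℝ E₁] [TopologicalSpace E₁]
    [IsTopologicalAddGroup E₁] [ContinuousSMul ℝ E₁]
    [AddCommGroup E₂] [Module ℝ E₂] [TopologicalSpace E₂]
    [IsTopologicalAddGroup E₂] [ContinuousSMul ℝ E₂]
    (B : Set E₂) (hB₀ : B ∈ nhds (0 : E₂)) (hBbal : Balanced ℝ B)
    (hBbdd : Bornology.IsVonNBounded ℝ B)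
    (O : TopologicalSpace (E₁ ⊗[ℝ] E₂)) (hO : IsTensorTopology E₁ E₂ O) :
    (∀ (U : ℕ → Set E₁) (t : ℕ → ℝ), (∀ n, U n ∈ nhds (0 : E₁) ∧ Balanced ℝ (U n)) →
        (∀ n, t n ≠ 0) →
        sumBoxes U (fun n => t n • B) = sumBoxes (fun n => t n • U n) (fun _ => B)) ∧
      (@nhds _ O 0).HasBasis
        (fun W : ℕ → Set E₁ => ∀ n, W n ∈ nhds (0 : E₁) ∧ Balanced ℝ (W n))
        (fun W => sumBoxes W (fun _ => B)) := by
  obtain ⟨_, _, hbasis⟩ := hO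
  refine ⟨fun U t _ _ => sumBoxes_congr fun n => tensorBox_smul_comm (t n) (U n) B, ?_⟩
  refine hbasis.to_hasBasis' ?_ ?_
  · rintro ⟨U, V⟩ ⟨hU, hV⟩
    -- for each n, find a nonzero scalar c n with B ⊆ c n • V n
    have h : ∀ n : ℕ, ∃ c : ℝ, B ⊆ c • V n ∧ c ≠ 0 := fun n =>
      ((hBbdd (hV n).1).and (Bornology.eventually_ne_cobounded 0)).exists
    choose c hc hc0 using h
    have hsub : ∀ n, (c n)⁻¹ • B ⊆ V n := by
      intro n
      have := Set.smul_set_mono (a := (c n)⁻¹) (hc n)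
      rwa [smul_smul, inv_mul_cancel₀ (hc0 n), one_smul] at this
    refine ⟨fun n => (c n)⁻¹ • U n, fun n =>
      ⟨(set_smul_mem_nhds_zero_iff (inv_ne_zero (hc0 n))).2 (hU n).1,
        (hU n).2.smul _⟩, ?_⟩
    refine sumBoxes_mono fun n => ?_
    rw [← tensorBox_smul_comm]
    exact Set.image2_subset subset_rfl (hsub n)
  · intro W hW
    exact hbasis.mem_of_mem (i := (W, fun _ => B)) ⟨hW, fun _ => ⟨hB₀, hBbal⟩⟩
end
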